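/- arXiv:2301.08621 — 4 statements merged into one kernel-verified Lean document; each statement's English description precedes it below -/
import Mathlib

section
/- For the family {y ↦ T_s · y : s ∈ {0,1}^{u+n−1}} of functions from GF(2)^n to GF(2)^u defined by u×n Toeplitz matrices T_s over GF(2), for any two distinct inputs y ≠ y' in GF(2)^n (so that y−y' is nonzero) and any w ∈ GF(2)^u, the probability over uniformly random s satisfies Pr_s[T_s·(y−y') = w] = 2^{−u}. -/
open Finset

/-- Multiplication of the `u × n` Toeplitz matrix `T_s` (over `GF(2)`), specified by the
string `s = (s_{1-u},…,s_{n-1})` of length `u + n - 1` via `T^{i,j} = s_{j-i}`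
(indices shifted to start at `0`), with a vector `v ∈ GF(2)^n`. -/
def Tmul (u n : ℕ) (s : Fin (u + n - 1) → ZMod 2) (v : Fin n → ZMod 2) :
    Fin u → ZMod 2 :=
  fun i => ∑ j : Fin n,
    s ⟨(j : ℕ) + u - 1 - (i : ℕ), by have := j.isLt; have := i.isLt; omega⟩ * v j

lemma Tmul_sub (u n : ℕ) (s s' : Fin (u + n - 1) → ZMod 2) (v : Fin n → ZMod 2) :
    Tmul u n (s - s') v = Tmul u n s v - Tmul u n s' v := by
  funext i
  simp [Tmul, sub_mul, Finset.sum_sub_distrib]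

lemma two_ne (x : ZMod 2) (hx : x ≠ 0) : x = 1 := by revert x; decide

lemma ker_lemma (u n : ℕ) (v : Fin n → ZMod 2) (j0 : Fin n)
    (hj0 : v j0 ≠ 0) (hmax : ∀ j, v j ≠ 0 → j ≤ j0)
    (d : Fin (u + n - 1) → ZMod 2)
    (hfree : ∀ k : Fin (u + n - 1), ¬((j0 : ℕ) ≤ (k : ℕ) ∧ (k : ℕ) < (j0 : ℕ) + u) → d k = 0)
    (hker : Tmul u n d v = 0) : d = 0 := by
  have hj0n := j0.isLt
  have key : ∀ m : ℕ, ∀ k : Fin (u + n - 1), (k : ℕ) = m → d k = 0 := by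
    intro m
    induction m using Nat.strong_induction_on with
    | _ m ih =>
      intro k hk
      by_cases h1 : (j0 : ℕ) ≤ (k : ℕ) ∧ (k : ℕ) < (j0 : ℕ) + u
      · obtain ⟨h1a, h1b⟩ := h1
        have hkl := k.isLt
        have hu1 : 1 ≤ u := by omega
        have hilt : (j0 : ℕ) + u - 1 - (k : ℕ) < u := by omega
        have hrow := congrFun hker ⟨(j0 : ℕ) + u - 1 - (k : ℕ), hilt⟩
        simp only [Tmul, Pi.zero_apply] at hrow
        rw [Finset.sum_eq_single j0] at hrow
        · have hkeq : (⟨(j0 : ℕ) + u - 1 - ((⟨(j0 : ℕ) + u - 1 - (k : ℕ), hilt⟩ : Fin u) : ℕ),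
              by omega⟩ : Fin (u + n - 1)) = k := by
            apply Fin.ext
            simp only
            omega
          rw [hkeq, two_ne (v j0) hj0, mul_one] at hrow
          exact hrow
        · intro j _ hjne
          by_cases hvj : v j = 0
          · rw [hvj, mul_zero]
          · have hjlt : (j : ℕ) < (j0 : ℕ) := by
              have hjle := hmax j hvj
              rcases lt_or_eq_of_le hjle with h | h
              · exact h
              · exact absurd h hjne
            have hdz : d ⟨(j : ℕ) + u - 1 - (((⟨(j0 : ℕ) + u - 1 - (k : ℕ), hilt⟩ : Fin u)) : ℕ),
                by have := j.isLt; omega⟩ = 0 := by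
              apply ih ((j : ℕ) + u - 1 - ((j0 : ℕ) + u - 1 - (k : ℕ)))
              · omega
              · simp only
            rw [hdz, zero_mul]
        · intro h; exact absurd (Finset.mem_univ j0) h
      · exact hfree k h1
  funext k
  exact key (k : ℕ) k rfl

lemma card_constrained (m u j0 : ℕ) (hm : j0 + u ≤ m) (hu : 0 < u) (w : Fin u → ZMod 2) :
    Fintype.card {t : Fin m → ZMod 2 //
        ∀ k : Fin m, (h : j0 ≤ (k : ℕ) ∧ (k : ℕ) < j0 + u) →
          t k = w ⟨j0 + u - 1 - (k : ℕ), by omega⟩} = 2 ^ (m - u) := by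
  classical
  let e : {t : Fin m → ZMod 2 //
      ∀ k : Fin m, (h : j0 ≤ (k : ℕ) ∧ (k : ℕ) < j0 + u) →
        t k = w ⟨j0 + u - 1 - (k : ℕ), by omega⟩} ≃
      ({k : Fin m // ¬(j0 ≤ (k : ℕ) ∧ (k : ℕ) < j0 + u)} → ZMod 2) :=
    { toFun := fun t k => t.1 k.1
      invFun := fun g => ⟨fun k =>
          if h : j0 ≤ (k : ℕ) ∧ (k : ℕ) < j0 + u then w ⟨j0 + u - 1 - (k : ℕ), by omega⟩
          else g ⟨k, h⟩,
        by intro k h; simp only [dif_pos h]⟩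
      left_inv := by
        intro t
        apply Subtype.ext
        funext k
        by_cases h : j0 ≤ (k : ℕ) ∧ (k : ℕ) < j0 + u
        · simp only [dif_pos h]
          exact (t.2 k h).symm
        · simp only [dif_neg h]
      right_inv := by
        intro g
        funext k
        simp only [dif_neg k.2] }
  rw [Fintype.card_congr e, Fintype.card_fun]
  have hc2 : Fintype.card (ZMod 2) = 2 := by simp
  rw [hc2]
  congr 1
  have hpivot : Fintype.card {k : Fin m // j0 ≤ (k : ℕ) ∧ (k : ℕ) < j0 + u} = u := by
    refine (Fintype.card_congr (⟨fun k => ⟨(k : ℕ) - j0, by have := k.2; omega⟩,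
      fun i => ⟨⟨j0 + (i : ℕ), by have := i.isLt; omega⟩, by
        have := i.isLt; simp only [Fin.val_mk]; omega⟩, ?_, ?_⟩)).trans (Fintype.card_fin u)
    · intro k
      apply Subtype.ext
      apply Fin.ext
      have := k.2
      simp only
      omega
    · intro i
      apply Fin.ext
      have := i.isLt
      simp only
      omega
  have hcompl := Fintype.card_subtype_compl
    (p := fun k : Fin m => j0 ≤ (k : ℕ) ∧ (k : ℕ) < j0 + u)
  rw [hcompl, hpivot, Fintype.card_fin]

/-- Pairwise independence of the Toeplitz family: for every nonzero `v ∈ GF(2)^n`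
and every `w ∈ GF(2)^u`, the number of strings `s ∈ {0,1}^{u+n-1}` with
`T_s · v = w` equals `2^{n-1}` (equivalently, `Pr_s[T_s · v = w] = 2^{-u}`). -/
theorem stmt3 (u n : ℕ) (hu : 0 < u) (hn : 0 < n)
    (v : Fin n → ZMod 2) (hv : v ≠ 0) (w : Fin u → ZMod 2) :
    (univ.filter (fun s : Fin (u + n - 1) → ZMod 2 => Tmul u n s v = w)).card
      = 2 ^ (n - 1) := by
  classical
  have hSne : (univ.filter (fun j : Fin n => v j ≠ 0)).Nonempty := by
    rw [Finset.filter_nonempty_iff]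
    by_contra h
    push_neg at h
    exact hv (funext fun j => h j (Finset.mem_univ j))
  obtain ⟨j0, hj0, hmax⟩ : ∃ j0 : Fin n, v j0 ≠ 0 ∧ ∀ j, v j ≠ 0 → j ≤ j0 := by
    refine ⟨(univ.filter (fun j : Fin n => v j ≠ 0)).max' hSne, ?_, ?_⟩
    · have := Finset.max'_mem _ hSne
      rw [Finset.mem_filter] at this
      exact this.2
    · exact fun j hj => Finset.le_max' _ j (Finset.mem_filter.mpr ⟨Finset.mem_univ j, hj⟩)
  have hj0n := j0.isLt
  have harith1 : (j0 : ℕ) + u ≤ u + n - 1 := by omega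
  have harith2 : u + n - 1 - u = n - 1 := by omega
  set Φ : (Fin (u + n - 1) → ZMod 2) → (Fin (u + n - 1) → ZMod 2) :=
    fun s k =>
      if h : (j0 : ℕ) ≤ (k : ℕ) ∧ (k : ℕ) < (j0 : ℕ) + u then
        Tmul u n s v ⟨(j0 : ℕ) + u - 1 - (k : ℕ), by omega⟩
      else s k with hΦdef
  have hΦpos : ∀ (s : Fin (u + n - 1) → ZMod 2) (k : Fin (u + n - 1))
      (h : (j0 : ℕ) ≤ (k : ℕ) ∧ (k : ℕ) < (j0 : ℕ) + u),
      Φ s k = Tmul u n s v ⟨(j0 : ℕ) + u - 1 - (k : ℕ), by omega⟩ := by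
    intro s k h
    simp only [hΦdef, dif_pos h]
  have hΦneg : ∀ (s : Fin (u + n - 1) → ZMod 2) (k : Fin (u + n - 1)),
      ¬((j0 : ℕ) ≤ (k : ℕ) ∧ (k : ℕ) < (j0 : ℕ) + u) → Φ s k = s k := by
    intro s k h
    simp only [hΦdef, dif_neg h]
  have hinj : Function.Injective Φ := by
    intro s s' h
    have hTeq : Tmul u n s v = Tmul u n s' v := by
      funext i
      have hi := i.isLt
      have hkin : (j0 : ℕ) + u - 1 - (i : ℕ) < u + n - 1 := by omega
      set k : Fin (u + n - 1) := ⟨(j0 : ℕ) + u - 1 - (i : ℕ), hkin⟩ with hkdef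
      have hkr : (j0 : ℕ) ≤ (k : ℕ) ∧ (k : ℕ) < (j0 : ℕ) + u := by
        simp only [hkdef, Fin.val_mk]
        omega
      have hcf := congrFun h k
      rw [hΦpos s k hkr, hΦpos s' k hkr] at hcf
      have hidx : (⟨(j0 : ℕ) + u - 1 - (k : ℕ), by omega⟩ : Fin u) = i := by
        apply Fin.ext
        simp only [hkdef, Fin.val_mk]
        omega
      rwa [hidx] at hcf
    have hdz : s - s' = 0 := by
      apply ker_lemma u n v j0 hj0 hmax
      · intro k hk
        have hcf := congrFun h k
        rw [hΦneg s k hk, hΦneg s' k hk] at hcf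
        simp [hcf]
      · rw [Tmul_sub, hTeq, sub_self]
    funext k
    have := congrFun hdz k
    simp only [Pi.sub_apply, Pi.zero_apply, sub_eq_zero] at this
    exact this
  have hbij : Function.Bijective Φ := (Finite.injective_iff_bijective).mp hinj
  let Φe : (Fin (u + n - 1) → ZMod 2) ≃ (Fin (u + n - 1) → ZMod 2) :=
    Equiv.ofBijective Φ hbij
  have hiff : ∀ s : Fin (u + n - 1) → ZMod 2,
      (Tmul u n s v = w) ↔
      (∀ k : Fin (u + n - 1), (h : (j0 : ℕ) ≤ (k : ℕ) ∧ (k : ℕ) < (j0 : ℕ) + u) →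
        Φe s k = w ⟨(j0 : ℕ) + u - 1 - (k : ℕ), by omega⟩) := by
    intro s
    constructor
    · intro hs k hk
      have := hΦpos s k hk
      rw [show Φe s = Φ s from rfl, this, hs]
    · intro hcon
      funext i
      have hi := i.isLt
      have hkin : (j0 : ℕ) + u - 1 - (i : ℕ) < u + n - 1 := by omega
      set k : Fin (u + n - 1) := ⟨(j0 : ℕ) + u - 1 - (i : ℕ), hkin⟩ with hkdef
      have hkr : (j0 : ℕ) ≤ (k : ℕ) ∧ (k : ℕ) < (j0 : ℕ) + u := by
        simp only [hkdef, Fin.val_mk]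
        omega
      have hc := hcon k hkr
      rw [show Φe s = Φ s from rfl, hΦpos s k hkr] at hc
      have hidx : (⟨(j0 : ℕ) + u - 1 - (k : ℕ), by omega⟩ : Fin u) = i := by
        apply Fin.ext
        simp only [hkdef, Fin.val_mk]
        omega
      rwa [hidx] at hc
  rw [← Fintype.card_subtype]
  have hcard : Fintype.card {s : Fin (u + n - 1) → ZMod 2 // Tmul u n s v = w}
      = Fintype.card {t : Fin (u + n - 1) → ZMod 2 //
          ∀ k : Fin (u + n - 1), (h : (j0 : ℕ) ≤ (k : ℕ) ∧ (k : ℕ) < (j0 : ℕ) + u) →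
            t k = w ⟨(j0 : ℕ) + u - 1 - (k : ℕ), by omega⟩} :=
    Fintype.card_congr (Equiv.subtypeEquiv
      (q := fun t => ∀ k : Fin (u + n - 1), (h : (j0 : ℕ) ≤ (k : ℕ) ∧ (k : ℕ) < (j0 : ℕ) + u) →
            t k = w ⟨(j0 : ℕ) + u - 1 - (k : ℕ), by omega⟩) Φe hiff)
  rw [hcard, card_constrained (u + n - 1) u (j0 : ℕ) harith1 hu w, harith2]
end

section
/- Classical leftover hash lemma for pairwise independent hash families: let H = {h : {0,1}^n → {0,1}^m} be a pairwise independent family (meaning Pr_{h}[h(x)=z ∧ h(x')=z'] = 2^{−2m} for all x ≠ x' and all z, z'), and let Y be a random variable on {0,1}^n with H_min(Y) ≥ k, independent of the uniformly chosen h. Then the statistical distance between (h(Y), h) and (U_m, h) is at most (1/2)·2^{(m−k)/2}. -/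
open Finset

/-- A probability mass function on a finite type. -/
def IsPmf {α : Type*} [Fintype α] (P : α → ℝ) : Prop :=
  (∀ x, 0 ≤ P x) ∧ ∑ x, P x = 1

/-- Classical min-entropy `H_min(Y) = -log₂ (max_y P y)`. -/
noncomputable def Hmin {α : Type*} [Fintype α] [Nonempty α] (P : α → ℝ) : ℝ :=
  - Real.logb 2 (Finset.univ.sup' Finset.univ_nonempty P)

/-- Statistical distance `(1/2) Σ_x |P x - Q x|`. -/
noncomputable def sd {α : Type*} [Fintype α] (P Q : α → ℝ) : ℝ :=
  (∑ x, |P x - Q x|) / 2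

/-- Auxiliary: square of a fiberwise sum expands to a double sum with a collision indicator. -/
lemma sq_sum_fiber {α β : Type*} [Fintype α] [Fintype β] [DecidableEq β]
    (g : α → β) (P : α → ℝ) :
    ∑ z : β, (∑ y ∈ univ.filter (fun y => g y = z), P y) ^ 2
      = ∑ y : α, ∑ y' : α, if g y = g y' then P y * P y' else 0 := by
  classical
  have h1 : ∀ z : β, (∑ y ∈ univ.filter (fun y => g y = z), P y) ^ 2
      = ∑ y ∈ univ.filter (fun y => g y = z),
          (P y * ∑ y' ∈ univ.filter (fun y' => g y' = g y), P y') := by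
    intro z
    rw [sq, Finset.sum_mul]
    refine Finset.sum_congr rfl fun y hy => ?_
    have hz : g y = z := (Finset.mem_filter.1 hy).2
    rw [hz]
  calc ∑ z : β, (∑ y ∈ univ.filter (fun y => g y = z), P y) ^ 2
      = ∑ z : β, ∑ y ∈ univ.filter (fun y => g y = z),
          (P y * ∑ y' ∈ univ.filter (fun y' => g y' = g y), P y') :=
        Finset.sum_congr rfl fun z _ => h1 z
    _ = ∑ y : α, (P y * ∑ y' ∈ univ.filter (fun y' => g y' = g y), P y') :=
        Finset.sum_fiberwise univ g _
    _ = ∑ y : α, ∑ y' : α, if g y = g y' then P y * P y' else 0 := by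
        refine Finset.sum_congr rfl fun y _ => ?_
        rw [Finset.mul_sum, Finset.sum_filter]
        refine Finset.sum_congr rfl fun y' _ => ?_
        exact if_congr eq_comm rfl rfl

/-- Auxiliary: the joint (unnormalized) distribution of `(h(Y), h)`. -/
noncomputable def lhlQ {ι α β : Type*} [Fintype α] [DecidableEq β]
    (h : ι → α → β) (P : α → ℝ) (zi : β × ι) : ℝ :=
  ∑ y ∈ Finset.univ.filter (fun y => h zi.2 y = zi.1), P y

/-- Classical leftover hash lemma. -/
theorem stmt4 {ι : Type*} [Fintype ι] [Nonempty ι] (n m : ℕ)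
    (h : ι → (Fin n → Bool) → (Fin m → Bool))
    (hpair : ∀ x x' : Fin n → Bool, x ≠ x' → ∀ z z' : Fin m → Bool,
      ((univ.filter (fun i : ι => h i x = z ∧ h i x' = z')).card : ℝ) / Fintype.card ι
        = (2 : ℝ) ^ (-(2 * (m : ℝ))))
    (k : ℝ) (P : (Fin n → Bool) → ℝ) (hP : IsPmf P) (hk : k ≤ Hmin P) :
    sd (fun zi : (Fin m → Bool) × ι =>
          (∑ y ∈ univ.filter (fun y => h zi.2 y = zi.1), P y) / Fintype.card ι)
      (fun zi : (Fin m → Bool) × ι => (2 : ℝ) ^ (-(m : ℝ)) / Fintype.card ι)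
      ≤ (1 / 2) * (2 : ℝ) ^ (((m : ℝ) - k) / 2) := by
  classical
  obtain ⟨hP0, hP1⟩ := hP
  have hN0 : 0 < (Fintype.card ι : ℝ) := by exact_mod_cast Fintype.card_pos
  set Nr : ℝ := (Fintype.card ι : ℝ) with hNrdef
  -- the max of P is at most 2^(-k)
  have hex : ∃ y, 0 < P y := by
    by_contra hcon
    push_neg at hcon
    have : ∑ y, P y ≤ 0 := Finset.sum_nonpos fun y _ => hcon y
    linarith
  have hsup_pos : 0 < univ.sup' univ_nonempty P := by
    obtain ⟨y, hy⟩ := hex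
    exact lt_of_lt_of_le hy (Finset.le_sup' P (mem_univ y))
  have hPk : ∀ y, P y ≤ (2 : ℝ) ^ (-k) := by
    intro y
    refine (Finset.le_sup' P (mem_univ y)).trans ?_
    have h1 : Real.logb 2 (univ.sup' univ_nonempty P) ≤ -k := by
      unfold Hmin at hk; linarith
    exact (Real.logb_le_iff_le_rpow one_lt_two hsup_pos).mp h1
  have hkpos : (0:ℝ) < (2 : ℝ) ^ (-k) := Real.rpow_pos_of_pos two_pos _
  have hmpos : (0:ℝ) < (2 : ℝ) ^ (-(m:ℝ)) := Real.rpow_pos_of_pos two_pos _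
  -- cardinality of the output space
  have hcardβ : (Fintype.card (Fin m → Bool) : ℝ) = (2 : ℝ) ^ (m : ℝ) := by
    rw [show Fintype.card (Fin m → Bool) = 2 ^ m by simp]
    push_cast
    rw [Real.rpow_natCast]
  -- collision count for distinct inputs
  have hC : ∀ y y' : Fin n → Bool, y ≠ y' →
      ((univ.filter fun i : ι => h i y = h i y').card : ℝ) = Nr * (2 : ℝ) ^ (-(m:ℝ)) := by
    intro y y' hyy
    have hcard : (univ.filter fun i : ι => h i y = h i y').card
        = ∑ z : Fin m → Bool, (univ.filter fun i : ι => h i y = z ∧ h i y' = z).card := by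
      rw [Finset.card_eq_sum_card_fiberwise
        (f := fun i : ι => h i y) (t := univ) (fun i _ => mem_univ _)]
      refine Finset.sum_congr rfl fun z _ => ?_
      rw [Finset.filter_filter]
      congr 1
      ext i
      simp only [Finset.mem_filter, Finset.mem_univ, true_and]
      constructor
      · rintro ⟨h1, h2⟩; exact ⟨h2, h2 ▸ h1.symm⟩
      · rintro ⟨h1, h2⟩; exact ⟨h1.trans h2.symm, h1⟩
    have hval : ∀ z : Fin m → Bool,
        ((univ.filter fun i : ι => h i y = z ∧ h i y' = z).card : ℝ)
          = Nr * (2 : ℝ) ^ (-(2 * (m:ℝ))) := by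
      intro z
      have := hpair y y' hyy z z
      field_simp at this
      linarith [this]
    calc ((univ.filter fun i : ι => h i y = h i y').card : ℝ)
        = ∑ z : Fin m → Bool, ((univ.filter fun i : ι => h i y = z ∧ h i y' = z).card : ℝ) := by
          rw [hcard]; push_cast; ring
      _ = ∑ _z : Fin m → Bool, Nr * (2 : ℝ) ^ (-(2 * (m:ℝ))) :=
          Finset.sum_congr rfl fun z _ => hval z
      _ = (Fintype.card (Fin m → Bool) : ℝ) * (Nr * (2 : ℝ) ^ (-(2 * (m:ℝ)))) := by
          rw [Finset.sum_const, Finset.card_univ, nsmul_eq_mul]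
      _ = Nr * ((2 : ℝ) ^ (m : ℝ) * (2 : ℝ) ^ (-(2 * (m:ℝ)))) := by rw [hcardβ]; ring
      _ = Nr * (2 : ℝ) ^ (-(m:ℝ)) := by
          rw [← Real.rpow_add two_pos]
          ring_nf
  -- sum of the joint distribution
  have hQone : ∀ i : ι, ∑ z : Fin m → Bool, lhlQ h P (z, i) = 1 := by
    intro i
    show ∑ z : Fin m → Bool, ∑ y ∈ univ.filter (fun y => h i y = z), P y = 1
    rw [Finset.sum_fiberwise univ (fun y => h i y) P, hP1]
  have hQsum : ∑ zi : (Fin m → Bool) × ι, lhlQ h P zi = Nr := by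
    rw [Fintype.sum_prod_type, Finset.sum_comm]
    calc ∑ i : ι, ∑ z : Fin m → Bool, lhlQ h P (z, i)
        = ∑ _i : ι, (1:ℝ) := Finset.sum_congr rfl fun i _ => hQone i
      _ = Nr := by rw [Finset.sum_const, Finset.card_univ, nsmul_eq_mul, mul_one]
  -- second moment bound
  have hQsqEq : ∑ zi : (Fin m → Bool) × ι, (lhlQ h P zi) ^ 2
      = ∑ y, ∑ y', ((univ.filter fun i : ι => h i y = h i y').card : ℝ) * (P y * P y') := by
    rw [Fintype.sum_prod_type, Finset.sum_comm]
    calc ∑ i : ι, ∑ z : Fin m → Bool, (lhlQ h P (z, i)) ^ 2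
        = ∑ i : ι, ∑ y, ∑ y', (if h i y = h i y' then P y * P y' else 0) :=
          Finset.sum_congr rfl fun i _ => sq_sum_fiber (h i) P
      _ = ∑ y, ∑ i : ι, ∑ y', (if h i y = h i y' then P y * P y' else 0) := Finset.sum_comm
      _ = ∑ y, ∑ y', ∑ i : ι, (if h i y = h i y' then P y * P y' else 0) :=
          Finset.sum_congr rfl fun y _ => Finset.sum_comm
      _ = ∑ y, ∑ y', ((univ.filter fun i : ι => h i y = h i y').card : ℝ) * (P y * P y') := by
          refine Finset.sum_congr rfl fun y _ => Finset.sum_congr rfl fun y' _ => ?_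
          rw [← Finset.sum_filter, Finset.sum_const, nsmul_eq_mul]
  have hQsq : ∑ zi : (Fin m → Bool) × ι, (lhlQ h P zi) ^ 2
      ≤ Nr * ((2:ℝ) ^ (-k) + (2:ℝ) ^ (-(m:ℝ))) := by
    rw [hQsqEq]
    have hbound : ∀ y : Fin n → Bool,
        ∑ y', ((univ.filter fun i : ι => h i y = h i y').card : ℝ) * (P y * P y')
          ≤ Nr * (2:ℝ) ^ (-k) * P y + Nr * (2:ℝ) ^ (-(m:ℝ)) * P y := by
      intro y
      rw [← Finset.add_sum_erase _ _ (mem_univ y)]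
      have hdiag : ((univ.filter fun i : ι => h i y = h i y).card : ℝ) * (P y * P y)
          ≤ Nr * (2:ℝ) ^ (-k) * P y := by
        have h1 : ((univ.filter fun i : ι => h i y = h i y).card : ℝ) ≤ Nr := by
          rw [hNrdef]
          exact_mod_cast Finset.card_filter_le _ _
        have h2 : P y * P y ≤ (2:ℝ) ^ (-k) * P y :=
          mul_le_mul_of_nonneg_right (hPk y) (hP0 y)
        calc ((univ.filter fun i : ι => h i y = h i y).card : ℝ) * (P y * P y)
            ≤ Nr * ((2:ℝ) ^ (-k) * P y) :=
              mul_le_mul h1 h2 (mul_nonneg (hP0 y) (hP0 y)) (le_of_lt hN0)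
          _ = Nr * (2:ℝ) ^ (-k) * P y := by ring
      have hoff : ∑ y' ∈ univ.erase y,
          ((univ.filter fun i : ι => h i y = h i y').card : ℝ) * (P y * P y')
            ≤ Nr * (2:ℝ) ^ (-(m:ℝ)) * P y := by
        calc ∑ y' ∈ univ.erase y,
            ((univ.filter fun i : ι => h i y = h i y').card : ℝ) * (P y * P y')
            = ∑ y' ∈ univ.erase y, Nr * (2:ℝ) ^ (-(m:ℝ)) * (P y * P y') := by
              refine Finset.sum_congr rfl fun y' hy' => ?_
              rw [hC y y' (Ne.symm (Finset.ne_of_mem_erase hy'))]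
          _ ≤ ∑ y', Nr * (2:ℝ) ^ (-(m:ℝ)) * (P y * P y') := by
              refine Finset.sum_le_sum_of_subset_of_nonneg (Finset.erase_subset _ _)
                fun y' _ _ => mul_nonneg (mul_nonneg hN0.le hmpos.le)
                  (mul_nonneg (hP0 y) (hP0 y'))
          _ = Nr * (2:ℝ) ^ (-(m:ℝ)) * P y * ∑ y', P y' := by
              rw [Finset.mul_sum]; refine Finset.sum_congr rfl fun y' _ => by ring
          _ = Nr * (2:ℝ) ^ (-(m:ℝ)) * P y := by rw [hP1, mul_one]
      exact add_le_add hdiag hoff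
    calc ∑ y, ∑ y', ((univ.filter fun i : ι => h i y = h i y').card : ℝ) * (P y * P y')
        ≤ ∑ y, (Nr * (2:ℝ) ^ (-k) * P y + Nr * (2:ℝ) ^ (-(m:ℝ)) * P y) :=
          Finset.sum_le_sum fun y _ => hbound y
      _ = (Nr * (2:ℝ) ^ (-k) + Nr * (2:ℝ) ^ (-(m:ℝ))) * ∑ y, P y := by
          rw [Finset.mul_sum]; exact Finset.sum_congr rfl fun y _ => by ring
      _ = Nr * ((2:ℝ) ^ (-k) + (2:ℝ) ^ (-(m:ℝ))) := by rw [hP1]; ring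
  -- rewrite the goal
  show (∑ zi : (Fin m → Bool) × ι,
      |lhlQ h P zi / Nr - (2:ℝ) ^ (-(m:ℝ)) / Nr|) / 2 ≤ (1/2) * (2:ℝ) ^ (((m:ℝ) - k)/2)
  set T : ℝ := ∑ zi : (Fin m → Bool) × ι, |lhlQ h P zi / Nr - (2:ℝ) ^ (-(m:ℝ)) / Nr|
    with hTdef
  have hT0 : 0 ≤ T := Finset.sum_nonneg fun zi _ => abs_nonneg _
  have hcardprod : (Fintype.card ((Fin m → Bool) × ι) : ℝ) = (2:ℝ) ^ (m:ℝ) * Nr := by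
    rw [Fintype.card_prod]; push_cast; rw [hcardβ]
  -- Cauchy-Schwarz
  have hCS : T ^ 2 ≤ ((2:ℝ) ^ (m:ℝ) * Nr)
      * ∑ zi : (Fin m → Bool) × ι, (lhlQ h P zi / Nr - (2:ℝ) ^ (-(m:ℝ)) / Nr) ^ 2 := by
    have := Finset.sum_mul_sq_le_sq_mul_sq univ (fun _ => (1:ℝ))
      (fun zi : (Fin m → Bool) × ι => |lhlQ h P zi / Nr - (2:ℝ) ^ (-(m:ℝ)) / Nr|)
    simp only [one_mul, one_pow, sq_abs, Finset.sum_const, Finset.card_univ,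
      nsmul_eq_mul, mul_one] at this
    rw [hTdef, ← hcardprod]
    exact this
  -- the variance computation
  have hvar : ∑ zi : (Fin m → Bool) × ι, (lhlQ h P zi / Nr - (2:ℝ) ^ (-(m:ℝ)) / Nr) ^ 2
      ≤ (2:ℝ) ^ (-k) / Nr := by
    have hexp : ∑ zi : (Fin m → Bool) × ι, (lhlQ h P zi / Nr - (2:ℝ) ^ (-(m:ℝ)) / Nr) ^ 2
        = (∑ zi : (Fin m → Bool) × ι, (lhlQ h P zi) ^ 2) / Nr ^ 2
          - (2:ℝ) ^ (-(m:ℝ)) / Nr := by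
      have e1 : ∀ zi : (Fin m → Bool) × ι,
          (lhlQ h P zi / Nr - (2:ℝ) ^ (-(m:ℝ)) / Nr) ^ 2
            = (lhlQ h P zi) ^ 2 * (1 / Nr ^ 2)
              - (2 * ((2:ℝ) ^ (-(m:ℝ)) / Nr) / Nr) * lhlQ h P zi
              + ((2:ℝ) ^ (-(m:ℝ)) / Nr) ^ 2 := by
        intro zi; field_simp; ring
      calc ∑ zi : (Fin m → Bool) × ι, (lhlQ h P zi / Nr - (2:ℝ) ^ (-(m:ℝ)) / Nr) ^ 2
          = ∑ zi : (Fin m → Bool) × ι,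
              ((lhlQ h P zi) ^ 2 * (1 / Nr ^ 2)
                - (2 * ((2:ℝ) ^ (-(m:ℝ)) / Nr) / Nr) * lhlQ h P zi
                + ((2:ℝ) ^ (-(m:ℝ)) / Nr) ^ 2) :=
            Finset.sum_congr rfl fun zi _ => e1 zi
        _ = (∑ zi : (Fin m → Bool) × ι, (lhlQ h P zi) ^ 2) * (1 / Nr ^ 2)
              - (2 * ((2:ℝ) ^ (-(m:ℝ)) / Nr) / Nr)
                * (∑ zi : (Fin m → Bool) × ι, lhlQ h P zi)
              + (Fintype.card ((Fin m → Bool) × ι) : ℝ) * ((2:ℝ) ^ (-(m:ℝ)) / Nr) ^ 2 := by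
            rw [Finset.sum_add_distrib, Finset.sum_sub_distrib, ← Finset.sum_mul,
              ← Finset.mul_sum, Finset.sum_const, Finset.card_univ, nsmul_eq_mul]
        _ = (∑ zi : (Fin m → Bool) × ι, (lhlQ h P zi) ^ 2) / Nr ^ 2
              - (2:ℝ) ^ (-(m:ℝ)) / Nr := by
            rw [hQsum, hcardprod]
            have h2m : (2:ℝ) ^ (m:ℝ) * ((2:ℝ) ^ (-(m:ℝ)) * (2:ℝ) ^ (-(m:ℝ)))
                = (2:ℝ) ^ (-(m:ℝ)) := by
              rw [← Real.rpow_add two_pos, ← Real.rpow_add two_pos]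
              ring_nf
            have ha : ((2:ℝ) ^ (m:ℝ) * Nr) * ((2:ℝ) ^ (-(m:ℝ)) / Nr) ^ 2
                = (2:ℝ) ^ (-(m:ℝ)) / Nr := by
              calc ((2:ℝ) ^ (m:ℝ) * Nr) * ((2:ℝ) ^ (-(m:ℝ)) / Nr) ^ 2
                  = ((2:ℝ) ^ (m:ℝ) * ((2:ℝ) ^ (-(m:ℝ)) * (2:ℝ) ^ (-(m:ℝ)))) * (Nr / Nr ^ 2) := by
                    ring
                _ = (2:ℝ) ^ (-(m:ℝ)) * (Nr / Nr ^ 2) := by rw [h2m]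
                _ = (2:ℝ) ^ (-(m:ℝ)) / Nr := by
                    field_simp
            rw [ha]
            field_simp
            ring
    rw [hexp]
    have e2 : (2:ℝ) ^ (-k) / Nr
        - ((∑ zi : (Fin m → Bool) × ι, (lhlQ h P zi) ^ 2) / Nr ^ 2
            - (2:ℝ) ^ (-(m:ℝ)) / Nr)
        = (Nr * ((2:ℝ) ^ (-k) + (2:ℝ) ^ (-(m:ℝ)))
            - ∑ zi : (Fin m → Bool) × ι, (lhlQ h P zi) ^ 2) / Nr ^ 2 := by
      field_simp
      ring
    have e3 : 0 ≤ (Nr * ((2:ℝ) ^ (-k) + (2:ℝ) ^ (-(m:ℝ)))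
        - ∑ zi : (Fin m → Bool) × ι, (lhlQ h P zi) ^ 2) / Nr ^ 2 :=
      div_nonneg (sub_nonneg.2 hQsq) (sq_nonneg _)
    linarith [e2 ▸ e3]
  -- combine
  have hB0 : (0:ℝ) ≤ (2:ℝ) ^ (((m:ℝ) - k)/2) := le_of_lt (Real.rpow_pos_of_pos two_pos _)
  have hTB : T ^ 2 ≤ ((2:ℝ) ^ (((m:ℝ) - k)/2)) ^ 2 := by
    have hBsq : ((2:ℝ) ^ (((m:ℝ) - k)/2)) ^ 2 = (2:ℝ) ^ ((m:ℝ) - k) := by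
      rw [← Real.rpow_natCast ((2:ℝ) ^ (((m:ℝ) - k)/2)) 2,
        ← Real.rpow_mul (by norm_num : (0:ℝ) ≤ 2)]
      norm_num
    have h1 : ((2:ℝ) ^ (m:ℝ) * Nr)
        * ∑ zi : (Fin m → Bool) × ι, (lhlQ h P zi / Nr - (2:ℝ) ^ (-(m:ℝ)) / Nr) ^ 2
        ≤ ((2:ℝ) ^ (m:ℝ) * Nr) * ((2:ℝ) ^ (-k) / Nr) := by
      refine mul_le_mul_of_nonneg_left hvar ?_
      positivity
    have h2 : ((2:ℝ) ^ (m:ℝ) * Nr) * ((2:ℝ) ^ (-k) / Nr) = (2:ℝ) ^ ((m:ℝ) - k) := by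
      have hmk : (2:ℝ) ^ (m:ℝ) * (2:ℝ) ^ (-k) = (2:ℝ) ^ ((m:ℝ) - k) := by
        rw [← Real.rpow_add two_pos]; ring_nf
      calc ((2:ℝ) ^ (m:ℝ) * Nr) * ((2:ℝ) ^ (-k) / Nr)
          = ((2:ℝ) ^ (m:ℝ) * (2:ℝ) ^ (-k)) * (Nr / Nr) := by ring
        _ = (2:ℝ) ^ ((m:ℝ) - k) := by rw [div_self hN0.ne', mul_one, hmk]
    rw [hBsq]
    calc T ^ 2 ≤ _ := hCS
      _ ≤ _ := h1
      _ = _ := h2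
  have hfinal : T ≤ (2:ℝ) ^ (((m:ℝ) - k)/2) := by
    have := Real.sqrt_le_sqrt hTB
    rwa [Real.sqrt_sq hT0, Real.sqrt_sq hB0] at this
  linarith
end

section
/- Composition of equal-block extraction (Theorem 2, classical version): let X = X₁⋯X_N be a classical (b,N,δ)-reverse block source, let n = ⌈(4/(δb))·log₂(N/ε)⌉, and apply a (δbn, 2^{−δbn/4}) min-entropy extractor Ext_g^{bn}: {0,1}^{bn} × {0,1}^{d_{bn}} → {0,1}^{m_{bn}} to each of the N/n consecutive blocks, using the last d_{bn} bits of each block's output as the seed for the next block and outputting the first m_{bn}−d_{bn} bits r^{(ℓ)}. Then the statistical distance between r^{(1)}∘⋯∘r^{(N/n)} and the uniform distribution on (N/n)(m_{bn}−d_{bn}) bits is at most (N/n)·2^{−δbn/4} ≤ ε. -/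
open Finset

/-- The uniform distribution on a finite type. -/
noncomputable def unif (α : Type*) [Fintype α] : α → ℝ := fun _ => (Fintype.card α : ℝ)⁻¹

/-- `f : {0,1}^n × {0,1}^dd → {0,1}^mm` is a `(k, ε)` min-entropy extractor. -/
def IsExtractor {n dd mm : ℕ} (f : (Fin n → Bool) → (Fin dd → Bool) → (Fin mm → Bool))
    (k ε : ℝ) : Prop :=
  ∀ P : (Fin n → Bool) → ℝ, IsPmf P → k ≤ Hmin P →
    sd (fun z => ∑ y, ∑ s, if f y s = z then P y * ((2 : ℝ)⁻¹) ^ dd else 0)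
      (unif (Fin mm → Bool)) ≤ ε

/-- `P` is a classical `(b, M, δ)`-reverse block source. -/
def IsRBS (b M : ℕ) (δ : ℝ) (P : (Fin M → (Fin b → Bool)) → ℝ) : Prop :=
  ∀ k i : ℕ, k ≤ i → i < M → ∀ xs z : Fin M → (Fin b → Bool),
    (∑ x ∈ univ.filter (fun x : Fin M → (Fin b → Bool) =>
        (∀ j : Fin M, k ≤ (j : ℕ) → (j : ℕ) ≤ i → x j = z j) ∧
        (∀ j : Fin M, i < (j : ℕ) → x j = xs j)), P x)
      ≤ (2 : ℝ) ^ (-((((i : ℝ) - k + 1)) * (δ * b))) *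
        (∑ x ∈ univ.filter (fun x : Fin M → (Fin b → Bool) =>
          ∀ j : Fin M, i < (j : ℕ) → x j = xs j), P x)

/-- Length of the `ℓ`-th block (0-indexed): here used with `Δ = 0`, so all blocks have
length `n₁`. -/
def nn (n₁ Δ ℓ : ℕ) : ℕ := n₁ + ℓ * Δ

/-- Number of samples consumed before block `ℓ`. -/
def off (n₁ Δ ℓ : ℕ) : ℕ := ∑ j ∈ Finset.range ℓ, nn n₁ Δ j

/-- The `b·n_ℓ` raw bits fed to the gadget extractor in block `ℓ`. -/
def blockBits (b n₁ Δ : ℕ) (hb : 0 < b) (x : ℕ → Fin b → Bool) (ℓ : ℕ) :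
    Fin (b * nn n₁ Δ ℓ) → Bool :=
  fun i => x (off n₁ Δ ℓ + (i : ℕ) / b) ⟨(i : ℕ) % b, Nat.mod_lt _ hb⟩

/-- The seed used in block `ℓ`: `s^{(1)}` is the initial seed, and `s^{(ℓ+1)}` consists
of the last `d_{bn}` bits of the gadget output `z^{(ℓ)}` on block `ℓ`. -/
def seeds (b n₁ Δ : ℕ) (d m : ℕ → ℕ)
    (E : (n : ℕ) → (Fin n → Bool) → (Fin (d n) → Bool) → (Fin (m n) → Bool))
    (hb : 0 < b)
    (hmd : ∀ ℓ, d (b * nn n₁ Δ (ℓ + 1)) ≤ m (b * nn n₁ Δ ℓ))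
    (x : ℕ → Fin b → Bool) (s0 : Fin (d (b * nn n₁ Δ 0)) → Bool) :
    (ℓ : ℕ) → Fin (d (b * nn n₁ Δ ℓ)) → Bool
  | 0 => s0
  | ℓ + 1 => fun i =>
      E (b * nn n₁ Δ ℓ) (blockBits b n₁ Δ hb x ℓ) (seeds b n₁ Δ d m E hb hmd x s0 ℓ)
        ⟨m (b * nn n₁ Δ ℓ) - d (b * nn n₁ Δ (ℓ + 1)) + (i : ℕ),
          by have h1 := i.isLt; have h2 := hmd ℓ; omega⟩

/-- The output `r^{(ℓ)}` of block `ℓ`: the first `m_{bn} - d_{bn}` bits of the gadget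
output `z^{(ℓ)}`. -/
def routput (b n₁ Δ : ℕ) (d m : ℕ → ℕ)
    (E : (n : ℕ) → (Fin n → Bool) → (Fin (d n) → Bool) → (Fin (m n) → Bool))
    (hb : 0 < b)
    (hmd : ∀ ℓ, d (b * nn n₁ Δ (ℓ + 1)) ≤ m (b * nn n₁ Δ ℓ))
    (x : ℕ → Fin b → Bool) (s0 : Fin (d (b * nn n₁ Δ 0)) → Bool) (ℓ : ℕ) :
    Fin (m (b * nn n₁ Δ ℓ) - d (b * nn n₁ Δ (ℓ + 1))) → Bool :=
  fun i =>
    E (b * nn n₁ Δ ℓ) (blockBits b n₁ Δ hb x ℓ) (seeds b n₁ Δ d m E hb hmd x s0 ℓ)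
      ⟨(i : ℕ), by have h1 := i.isLt; omega⟩

/-- Extend finitely many raw samples to an infinite stream (padding by zeros). -/
def extData (b M : ℕ) (x : Fin M → Fin b → Bool) : ℕ → Fin b → Bool :=
  fun i => if h : i < M then x ⟨i, h⟩ else fun _ => false

section Hybrid

variable {X Y S Z R0 : Type*} [Fintype X] [Fintype S] [Fintype Z] [Fintype R0]
  [DecidableEq X] [DecidableEq Z] [DecidableEq R0] [DecidableEq S]

/-- Seed at block `j+t` when the process is started at block `j` with seed `s`. -/
def seedIter (f : Y → S → Z) (blk : ℕ → X → Y) (zsnd : Z → S) (j : ℕ) :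
    ℕ → X → S → S
  | 0, _, s => s
  | (t+1), x, s => zsnd (f (blk (j + t) x) (seedIter f blk zsnd j t x s))

/-- Output of block `ℓ` when the process is started at block `j` with seed `s`. -/
def RoutH (f : Y → S → Z) (blk : ℕ → X → Y) (zfst : Z → R0) (zsnd : Z → S)
    {L : ℕ} (j : ℕ) (x : X) (s : S) (ℓ : Fin L) : R0 :=
  zfst (f (blk ℓ x) (seedIter f blk zsnd j ((ℓ : ℕ) - j) x s))

def condH (f : Y → S → Z) (blk : ℕ → X → Y) (zfst : Z → R0) (zsnd : Z → S)
    (L : ℕ) (j : ℕ) (x : X) (s : S) (r : Fin L → R0) : Prop :=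
  ∀ ℓ : Fin L, j ≤ (ℓ : ℕ) → RoutH f blk zfst zsnd j x s ℓ = r ℓ

instance condH.dec (f : Y → S → Z) (blk : ℕ → X → Y) (zfst : Z → R0) (zsnd : Z → S)
    (L j : ℕ) (x : X) (s : S) (r : Fin L → R0) : Decidable (condH f blk zfst zsnd L j x s r) := by
  unfold condH; infer_instance

/-- The `j`-th hybrid distribution. -/
noncomputable def AH (f : Y → S → Z) (blk : ℕ → X → Y) (zfst : Z → R0) (zsnd : Z → S)
    (L : ℕ) (P : X → ℝ) (j : ℕ) (r : Fin L → R0) : ℝ :=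
  ((Fintype.card R0 : ℝ))⁻¹ ^ j *
    ∑ x, ∑ s, if condH f blk zfst zsnd L j x s r then P x * ((Fintype.card S : ℝ))⁻¹ else 0

variable (f : Y → S → Z) (blk : ℕ → X → Y) (zfst : Z → R0) (zsnd : Z → S)

theorem seedIter_shift (j t : ℕ) (x : X) (s : S) :
    seedIter f blk zsnd j (t+1) x s
      = seedIter f blk zsnd (j+1) t x (zsnd (f (blk j x) s)) := by
  induction t with
  | zero => simp [seedIter]
  | succ t ih =>
      rw [show seedIter f blk zsnd j (t+1+1) x s
            = zsnd (f (blk (j + (t+1)) x) (seedIter f blk zsnd j (t+1) x s)) from rfl, ih]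
      rw [show j + (t+1) = (j+1) + t by omega]
      rfl

theorem seedIter_congr {j : ℕ} {x x' : X} (h : ∀ u, j ≤ u → blk u x = blk u x') :
    ∀ (t : ℕ) (s : S), seedIter f blk zsnd j t x s = seedIter f blk zsnd j t x' s := by
  intro t
  induction t with
  | zero => intro s; rfl
  | succ t ih =>
      intro s
      show zsnd (f (blk (j+t) x) _) = zsnd (f (blk (j+t) x') _)
      rw [ih, h (j+t) (by omega)]

theorem condH_succ {L : ℕ} (j : ℕ) (hj : j < L) (x : X) (s : S) (r : Fin L → R0) :
    condH f blk zfst zsnd L j x s r ↔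
      (zfst (f (blk j x) s) = r ⟨j, hj⟩ ∧
        condH f blk zfst zsnd L (j+1) x (zsnd (f (blk j x) s)) r) := by
  have hR : ∀ ℓ : Fin L, j + 1 ≤ (ℓ : ℕ) →
      RoutH f blk zfst zsnd j x s ℓ
        = RoutH f blk zfst zsnd (j+1) x (zsnd (f (blk j x) s)) ℓ := by
    intro ℓ hℓ
    unfold RoutH
    rw [show (ℓ : ℕ) - j = ((ℓ : ℕ) - (j+1)) + 1 by omega, seedIter_shift]
  constructor
  · intro h
    refine ⟨?_, ?_⟩
    · have h0 := h ⟨j, hj⟩ (by simp)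
      unfold RoutH at h0
      simp only [Fin.val_mk, Nat.sub_self] at h0
      exact h0
    · intro ℓ hℓ
      rw [← hR ℓ hℓ]; exact h ℓ (by omega)
  · rintro ⟨h1, h2⟩ ℓ hℓ
    rcases Nat.lt_or_ge (ℓ : ℕ) (j+1) with hlt | hge
    · have hℓj : (ℓ : ℕ) = j := by omega
      have hr : r ℓ = r ⟨j, hj⟩ := by congr 1; exact Fin.ext hℓj
      unfold RoutH
      rw [hℓj, Nat.sub_self, hr]
      exact h1
    · rw [hR ℓ hge]; exact h2 ℓ hge

theorem condH_fut (fut : ℕ → X → X)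
    (Hfut : ∀ j ℓ x, j < ℓ → blk ℓ (fut j x) = blk ℓ x)
    {L : ℕ} (j : ℕ) (x : X) (s : S) (r : Fin L → R0) :
    condH f blk zfst zsnd L (j+1) x s r ↔ condH f blk zfst zsnd L (j+1) (fut j x) s r := by
  have hs : ∀ t s', seedIter f blk zsnd (j+1) t x s' = seedIter f blk zsnd (j+1) t (fut j x) s' :=
    seedIter_congr f blk zsnd (fun u hu => (Hfut j u x (by omega)).symm)
  constructor <;> intro h ℓ hℓ <;>
    · have := h ℓ hℓ
      unfold RoutH at this ⊢
      rw [hs] at *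
      rwa [Hfut j ℓ x (by omega)] at *
end Hybrid

section Helpers
variable {ι κ : Type*} [Fintype ι] [Fintype κ] [DecidableEq ι] [DecidableEq κ]

lemma sum_delta2 (a : ι) (c : κ) (F : ι → κ → ℝ) :
    ∑ w, ∑ z, (if a = w ∧ c = z then F w z else 0) = F a c := by
  simp [ite_and]

lemma sum_ite_out (C : Prop) [Decidable C] (g : ι → ℝ) :
    ∑ i, (if C then g i else 0) = if C then (∑ i, g i) else 0 := by
  by_cases h : C <;> simp [h]

lemma ite_sub_ite' (A : Prop) [Decidable A] (a b : ℝ) :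
    (if A then a else 0) - (if A then b else 0) = if A then a - b else 0 := by
  by_cases h : A <;> simp [h]

lemma abs_ite' (A : Prop) [Decidable A] (a : ℝ) :
    |if A then a else 0| = if A then |a| else 0 := by
  by_cases h : A <;> simp [h]

lemma ite_swap' (A B : Prop) [Decidable A] [Decidable B] (v : ℝ) :
    (if A then (if B then v else 0) else 0) = if B then (if A then v else 0) else 0 := by
  by_cases h : A <;> by_cases h' : B <;> simp [h, h']

lemma ite_merge' (A B : Prop) [Decidable A] [Decidable B] (v : ℝ) :
    (if A then (if B then v else 0) else 0) = if A ∧ B then v else 0 := by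
  by_cases h : A <;> by_cases h' : B <;> simp [h, h']

lemma sum_swap4 {α β γ δ : Type*} [Fintype α] [Fintype β] [Fintype γ] [Fintype δ]
    (g : α → β → γ → δ → ℝ) :
    ∑ x : α, ∑ s : β, ∑ w : γ, ∑ z : δ, g x s w z
      = ∑ w, ∑ z, ∑ x, ∑ s, g x s w z := by
  calc ∑ x : α, ∑ s : β, ∑ w : γ, ∑ z : δ, g x s w z
      = ∑ x : α, ∑ w : γ, ∑ s : β, ∑ z : δ, g x s w z :=
        Finset.sum_congr rfl fun x _ => Finset.sum_comm
    _ = ∑ w : γ, ∑ x : α, ∑ s : β, ∑ z : δ, g x s w z := Finset.sum_comm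
    _ = ∑ w : γ, ∑ x : α, ∑ z : δ, ∑ s : β, g x s w z :=
        Finset.sum_congr rfl fun w _ => Finset.sum_congr rfl fun x _ => Finset.sum_comm
    _ = ∑ w : γ, ∑ z : δ, ∑ x : α, ∑ s : β, g x s w z :=
        Finset.sum_congr rfl fun w _ => Finset.sum_comm

lemma sum_rot3 {α β γ : Type*} [Fintype α] [Fintype β] [Fintype γ] (g : α → β → γ → ℝ) :
    ∑ a : α, ∑ b : β, ∑ c : γ, g a b c = ∑ c : γ, ∑ b : β, ∑ a : α, g a b c := by
  calc ∑ a : α, ∑ b : β, ∑ c : γ, g a b c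
      = ∑ a : α, ∑ c : γ, ∑ b : β, g a b c :=
        Finset.sum_congr rfl fun a _ => Finset.sum_comm
    _ = ∑ c : γ, ∑ a : α, ∑ b : β, g a b c := Finset.sum_comm
    _ = ∑ c : γ, ∑ b : β, ∑ a : α, g a b c :=
        Finset.sum_congr rfl fun c _ => Finset.sum_comm

end Helpers

section Hybrid2
variable {X Y S Z R0 : Type*} [Fintype X] [Fintype S] [Fintype Z] [Fintype R0]
  [DecidableEq X] [DecidableEq Z] [DecidableEq R0] [DecidableEq S]
  (f : Y → S → Z) (blk : ℕ → X → Y) (zfst : Z → R0) (zsnd : Z → S)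
  (fut : ℕ → X → X) (L : ℕ) (P : X → ℝ)

theorem AH_expand (Hfut : ∀ j ℓ x, j < ℓ → blk ℓ (fut j x) = blk ℓ x)
    {j : ℕ} (hj : j < L) (r : Fin L → R0) :
    AH f blk zfst zsnd L P j r = ((Fintype.card R0 : ℝ))⁻¹ ^ j *
      ∑ w, ∑ z, if (zfst z = r ⟨j, hj⟩ ∧ condH f blk zfst zsnd L (j+1) w (zsnd z) r) then
        ((Fintype.card S : ℝ))⁻¹ *
          ∑ x, ∑ s, (if fut j x = w ∧ f (blk j x) s = z then P x else 0)
      else 0 := by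
  unfold AH
  congr 1
  have hcong : ∀ x s, (if condH f blk zfst zsnd L j x s r then P x * ((Fintype.card S : ℝ))⁻¹ else 0)
      = if (zfst (f (blk j x) s) = r ⟨j, hj⟩ ∧
            condH f blk zfst zsnd L (j+1) (fut j x) (zsnd (f (blk j x) s)) r) then
          P x * ((Fintype.card S : ℝ))⁻¹ else 0 := by
    intro x s
    refine if_congr ?_ rfl rfl
    rw [condH_succ f blk zfst zsnd j hj, condH_fut f blk zfst zsnd fut Hfut]
  calc ∑ x, ∑ s, (if condH f blk zfst zsnd L j x s r then P x * ((Fintype.card S : ℝ))⁻¹ else 0)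
      = ∑ x, ∑ s, ∑ w, ∑ z, (if fut j x = w ∧ f (blk j x) s = z then
          (if (zfst z = r ⟨j, hj⟩ ∧ condH f blk zfst zsnd L (j+1) w (zsnd z) r) then
            P x * ((Fintype.card S : ℝ))⁻¹ else 0) else 0) := by
        refine Finset.sum_congr rfl fun x _ => Finset.sum_congr rfl fun s _ => ?_
        rw [hcong x s, sum_delta2]
    _ = ∑ w, ∑ z, ∑ x, ∑ s, (if fut j x = w ∧ f (blk j x) s = z then
          (if (zfst z = r ⟨j, hj⟩ ∧ condH f blk zfst zsnd L (j+1) w (zsnd z) r) then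
            P x * ((Fintype.card S : ℝ))⁻¹ else 0) else 0) := sum_swap4 _
    _ = ∑ w, ∑ z, (if (zfst z = r ⟨j, hj⟩ ∧ condH f blk zfst zsnd L (j+1) w (zsnd z) r) then
          ((Fintype.card S : ℝ))⁻¹ * ∑ x, ∑ s, (if fut j x = w ∧ f (blk j x) s = z then P x else 0)
        else 0) := by
        refine Finset.sum_congr rfl fun w _ => Finset.sum_congr rfl fun z _ => ?_
        rw [show ((Fintype.card S : ℝ))⁻¹ *
              ∑ x, ∑ s, (if fut j x = w ∧ f (blk j x) s = z then P x else 0)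
            = ∑ x, ∑ s, (if fut j x = w ∧ f (blk j x) s = z then
                P x * ((Fintype.card S : ℝ))⁻¹ else 0) by
          rw [Finset.mul_sum]
          refine Finset.sum_congr rfl fun x _ => ?_
          rw [Finset.mul_sum]
          refine Finset.sum_congr rfl fun s _ => ?_
          by_cases h : fut j x = w ∧ f (blk j x) s = z <;> simp [h] <;> ring]
        rw [← sum_ite_out]
        refine Finset.sum_congr rfl fun x _ => ?_
        rw [← sum_ite_out]
        refine Finset.sum_congr rfl fun s _ => ?_
        exact ite_swap' _ _ _

theorem AH_expand_succ (hbij : Function.Bijective fun z => (zfst z, zsnd z))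
    (Hfut : ∀ j ℓ x, j < ℓ → blk ℓ (fut j x) = blk ℓ x)
    {j : ℕ} (hj : j < L) (r : Fin L → R0) :
    AH f blk zfst zsnd L P (j+1) r = ((Fintype.card R0 : ℝ))⁻¹ ^ j *
      ∑ w, ∑ z, if (zfst z = r ⟨j, hj⟩ ∧ condH f blk zfst zsnd L (j+1) w (zsnd z) r) then
        (∑ x, (if fut j x = w then P x else 0)) * ((Fintype.card Z : ℝ))⁻¹
      else 0 := by
  have hcardZ : ((Fintype.card Z : ℝ))⁻¹
      = ((Fintype.card R0 : ℝ))⁻¹ * ((Fintype.card S : ℝ))⁻¹ := by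
    rw [Fintype.card_of_bijective hbij, Fintype.card_prod]
    push_cast
    rw [mul_inv]
  unfold AH
  rw [pow_succ, mul_assoc]
  congr 1
  set uS := ((Fintype.card S : ℝ))⁻¹ with huS
  set uR := ((Fintype.card R0 : ℝ))⁻¹ with huR
  calc uR * ∑ x, ∑ s, (if condH f blk zfst zsnd L (j+1) x s r then P x * uS else 0)
      = uR * ∑ x, ∑ s : S, ∑ w, (if fut j x = w then
          (if condH f blk zfst zsnd L (j+1) w s r then P x * uS else 0) else 0) := by
        congr 1
        refine Finset.sum_congr rfl fun x _ => Finset.sum_congr rfl fun s _ => ?_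
        rw [Finset.sum_ite_eq univ (fut j x)
          (fun w => (if condH f blk zfst zsnd L (j+1) w s r then P x * uS else 0))]
        simp only [Finset.mem_univ, if_true]
        exact if_congr (condH_fut f blk zfst zsnd fut Hfut j x s r) rfl rfl
    _ = uR * ∑ x, ∑ w, ∑ s : S, (if fut j x = w then
          (if condH f blk zfst zsnd L (j+1) w s r then P x * uS else 0) else 0) := by
        congr 1
        exact Finset.sum_congr rfl fun x _ => Finset.sum_comm
    _ = uR * ∑ w, ∑ x, ∑ s : S, (if fut j x = w then
          (if condH f blk zfst zsnd L (j+1) w s r then P x * uS else 0) else 0) := by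
        congr 1
        exact Finset.sum_comm
    _ = ∑ w, ∑ s' : S, (if condH f blk zfst zsnd L (j+1) w s' r then
          (∑ x, (if fut j x = w then P x else 0)) * (uR * uS) else 0) := by
        rw [Finset.mul_sum]
        refine Finset.sum_congr rfl fun w _ => ?_
        rw [show (∑ x, ∑ s : S, (if fut j x = w then
              (if condH f blk zfst zsnd L (j+1) w s r then P x * uS else 0) else 0))
            = ∑ s' : S, (if condH f blk zfst zsnd L (j+1) w s' r then
              (∑ x, (if fut j x = w then P x else 0)) * uS else 0) by
          rw [Finset.sum_comm]
          refine Finset.sum_congr rfl fun s _ => ?_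
          rw [show (∑ x, (if fut j x = w then P x else 0)) * uS
              = ∑ x, (if fut j x = w then P x * uS else 0) by
            rw [Finset.sum_mul]
            exact Finset.sum_congr rfl fun x _ => by
              by_cases h : fut j x = w <;> simp [h]]
          rw [← sum_ite_out]
          exact Finset.sum_congr rfl fun x _ => ite_swap' _ _ _]
        rw [Finset.mul_sum]
        refine Finset.sum_congr rfl fun s' _ => ?_
        by_cases h : condH f blk zfst zsnd L (j+1) w s' r <;> simp [h] <;> ring
    _ = ∑ w, ∑ z, (if (zfst z = r ⟨j, hj⟩ ∧ condH f blk zfst zsnd L (j+1) w (zsnd z) r) then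
          (∑ x, (if fut j x = w then P x else 0)) * ((Fintype.card Z : ℝ))⁻¹ else 0) := by
        refine Finset.sum_congr rfl fun w _ => ?_
        rw [hcardZ]
        have hbj : ∑ z, (fun p : R0 × S => if p.1 = r ⟨j, hj⟩ then
              (if condH f blk zfst zsnd L (j+1) w p.2 r then
                (∑ x, (if fut j x = w then P x else 0)) * (uR * uS) else 0) else 0)
                (zfst z, zsnd z)
            = ∑ p : R0 × S, (if p.1 = r ⟨j, hj⟩ then
              (if condH f blk zfst zsnd L (j+1) w p.2 r then
                (∑ x, (if fut j x = w then P x else 0)) * (uR * uS) else 0) else 0) :=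
          Fintype.sum_bijective _ hbij _ _ (fun z => rfl)
        simp only at hbj
        rw [show (∑ z, (if (zfst z = r ⟨j, hj⟩ ∧ condH f blk zfst zsnd L (j+1) w (zsnd z) r) then
              (∑ x, (if fut j x = w then P x else 0)) * (uR * uS) else 0))
            = ∑ z, (if zfst z = r ⟨j, hj⟩ then
              (if condH f blk zfst zsnd L (j+1) w (zsnd z) r then
                (∑ x, (if fut j x = w then P x else 0)) * (uR * uS) else 0) else 0) from
          Finset.sum_congr rfl fun z _ => (ite_merge' _ _ _).symm]
        rw [hbj, Fintype.sum_prod_type, Finset.sum_comm]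
        refine Finset.sum_congr rfl fun s' _ => ?_
        simp

theorem count_cond {j : ℕ} (hj : j < L) (w : X) (z : Z) :
    ∑ r : Fin L → R0, (if (zfst z = r ⟨j, hj⟩ ∧
        condH f blk zfst zsnd L (j+1) w (zsnd z) r) then (1:ℝ) else 0)
      = (Fintype.card R0 : ℝ) ^ j := by
  classical
  set v : Fin L → R0 := fun ℓ => if (ℓ : ℕ) = j then zfst z
    else RoutH f blk zfst zsnd (j+1) w (zsnd z) ℓ with hv
  have hiff : ∀ r : Fin L → R0,
      (zfst z = r ⟨j, hj⟩ ∧ condH f blk zfst zsnd L (j+1) w (zsnd z) r)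
        ↔ ∀ ℓ : Fin L, j ≤ (ℓ : ℕ) → r ℓ = v ℓ := by
    intro r
    constructor
    · rintro ⟨h1, h2⟩ ℓ hℓ
      by_cases hℓj : (ℓ : ℕ) = j
      · have : ℓ = ⟨j, hj⟩ := Fin.ext hℓj
        rw [this, hv]
        simp [← h1]
      · rw [hv]
        simp only [hℓj, if_false]
        exact (h2 ℓ (by omega)).symm
    · intro h
      refine ⟨?_, ?_⟩
      · have := h ⟨j, hj⟩ (by simp)
        rw [this, hv]
        simp
      · intro ℓ hℓ
        rw [h ℓ (by omega), hv]
        simp only [show (ℓ : ℕ) ≠ j by omega, if_false]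
    
  calc ∑ r : Fin L → R0, (if (zfst z = r ⟨j, hj⟩ ∧
        condH f blk zfst zsnd L (j+1) w (zsnd z) r) then (1:ℝ) else 0)
      = ∑ r : Fin L → R0, ∏ ℓ : Fin L, (if (j ≤ (ℓ : ℕ) → r ℓ = v ℓ) then (1:ℝ) else 0) := by
        refine Finset.sum_congr rfl fun r _ => ?_
        rw [if_congr (hiff r) rfl rfl]
        by_cases h : ∀ ℓ : Fin L, j ≤ (ℓ : ℕ) → r ℓ = v ℓ
        · rw [if_pos h]
          exact (Finset.prod_eq_one fun ℓ _ => by rw [if_pos (h ℓ)]).symm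
        · rw [if_neg h]
          push_neg at h
          obtain ⟨ℓ0, hℓ0, hne⟩ := h
          exact (Finset.prod_eq_zero (Finset.mem_univ ℓ0)
            (by rw [if_neg]; intro hc; exact hne (hc hℓ0))).symm
    _ = ∏ ℓ : Fin L, ∑ a : R0, (if (j ≤ (ℓ : ℕ) → a = v ℓ) then (1:ℝ) else 0) := by
        rw [Fintype.prod_sum (fun (ℓ : Fin L) (a : R0) => if (j ≤ (ℓ : ℕ) → a = v ℓ) then (1:ℝ) else 0)]
    _ = ∏ ℓ : Fin L, (if j ≤ (ℓ : ℕ) then (1:ℝ) else (Fintype.card R0 : ℝ)) := by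
        refine Finset.prod_congr rfl fun ℓ _ => ?_
        by_cases h : j ≤ (ℓ : ℕ)
        · rw [if_pos h]
          rw [show (fun a : R0 => if (j ≤ (ℓ : ℕ) → a = v ℓ) then (1:ℝ) else 0)
              = fun a : R0 => if a = v ℓ then (1:ℝ) else 0 by
            funext a; exact if_congr (by tauto) rfl rfl]
          simp
        · rw [if_neg h]
          rw [show (fun a : R0 => if (j ≤ (ℓ : ℕ) → a = v ℓ) then (1:ℝ) else 0)
              = fun _ : R0 => (1:ℝ) by
            funext a; rw [if_pos (fun hc => absurd hc h)]]
          simp [Finset.card_univ]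
    _ = (Fintype.card R0 : ℝ) ^ j := by
        rw [Finset.prod_ite]
        simp only [Finset.prod_const_one, one_mul, Finset.prod_const]
        congr 1
        have : (univ.filter fun ℓ : Fin L => ¬ j ≤ (ℓ : ℕ))
            = Finset.Iio (⟨j, hj⟩ : Fin L) := by
          ext i; simp [Fin.lt_def]
        rw [this, Fin.card_Iio]

theorem AH_step [Nonempty R0]
    (hbij : Function.Bijective fun z => (zfst z, zsnd z))
    (Hfut : ∀ j ℓ x, j < ℓ → blk ℓ (fut j x) = blk ℓ x)
    (hP1 : ∑ x, P x = 1) (e : ℝ)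
    (H1 : ∀ j, j < L → ∀ w : X,
      ∑ z, |((Fintype.card S : ℝ))⁻¹ *
            (∑ x, ∑ s, (if fut j x = w ∧ f (blk j x) s = z then P x else 0))
          - (∑ x, (if fut j x = w then P x else 0)) * ((Fintype.card Z : ℝ))⁻¹|
        ≤ 2 * e * (∑ x, (if fut j x = w then P x else 0)))
    {j : ℕ} (hj : j < L) :
    ∑ r : Fin L → R0, |AH f blk zfst zsnd L P j r - AH f blk zfst zsnd L P (j+1) r|
      ≤ 2 * e := by
  classical
  set uR := ((Fintype.card R0 : ℝ))⁻¹ with huR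
  set A : X → Z → ℝ := fun w z => ((Fintype.card S : ℝ))⁻¹ *
      (∑ x, ∑ s, (if fut j x = w ∧ f (blk j x) s = z then P x else 0)) with hA
  set B : X → Z → ℝ := fun w z =>
      (∑ x, (if fut j x = w then P x else 0)) * ((Fintype.card Z : ℝ))⁻¹ with hB
  have huRnn : (0:ℝ) ≤ uR ^ j := by positivity
  have step1 : ∀ r : Fin L → R0,
      AH f blk zfst zsnd L P j r - AH f blk zfst zsnd L P (j+1) r
        = uR ^ j * ∑ w, ∑ z, (if (zfst z = r ⟨j, hj⟩ ∧
            condH f blk zfst zsnd L (j+1) w (zsnd z) r) then A w z - B w z else 0) := by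
    intro r
    rw [AH_expand f blk zfst zsnd fut L P Hfut hj r,
      AH_expand_succ f blk zfst zsnd fut L P hbij Hfut hj r, ← mul_sub]
    congr 1
    rw [← Finset.sum_sub_distrib]
    refine Finset.sum_congr rfl fun w _ => ?_
    rw [← Finset.sum_sub_distrib]
    exact Finset.sum_congr rfl fun z _ => ite_sub_ite' _ _ _
  calc ∑ r : Fin L → R0, |AH f blk zfst zsnd L P j r - AH f blk zfst zsnd L P (j+1) r|
      ≤ ∑ r : Fin L → R0, uR ^ j * ∑ w, ∑ z, (if (zfst z = r ⟨j, hj⟩ ∧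
            condH f blk zfst zsnd L (j+1) w (zsnd z) r) then |A w z - B w z| else 0) := by
        refine Finset.sum_le_sum fun r _ => ?_
        rw [step1 r, abs_mul, abs_of_nonneg huRnn]
        refine mul_le_mul_of_nonneg_left ?_ huRnn
        refine le_trans (Finset.abs_sum_le_sum_abs _ _) (Finset.sum_le_sum fun w _ => ?_)
        refine le_trans (Finset.abs_sum_le_sum_abs _ _) (Finset.sum_le_sum fun z _ => ?_)
        rw [abs_ite']
    _ = uR ^ j * ∑ w, ∑ z, |A w z - B w z| * ∑ r : Fin L → R0,
          (if (zfst z = r ⟨j, hj⟩ ∧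
            condH f blk zfst zsnd L (j+1) w (zsnd z) r) then (1:ℝ) else 0) := by
        rw [← Finset.mul_sum]
        congr 1
        rw [Finset.sum_comm]
        refine Finset.sum_congr rfl fun w _ => ?_
        rw [Finset.sum_comm]
        refine Finset.sum_congr rfl fun z _ => ?_
        rw [Finset.mul_sum]
        refine Finset.sum_congr rfl fun r _ => ?_
        by_cases h : (zfst z = r ⟨j, hj⟩ ∧
          condH f blk zfst zsnd L (j+1) w (zsnd z) r) <;> simp [h]
    _ = ∑ w, ∑ z, |A w z - B w z| := by
        have hcc : (Fintype.card R0 : ℝ) ^ j * uR ^ j = 1 := by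
          rw [huR, inv_pow, mul_inv_cancel₀ (by positivity)]
        simp only [count_cond f blk zfst zsnd L hj]
        rw [show (∑ w, ∑ z, (|A w z - B w z| * (Fintype.card R0 : ℝ) ^ j))
            = (∑ w, ∑ z, |A w z - B w z|) * (Fintype.card R0 : ℝ) ^ j by
          rw [Finset.sum_mul]
          exact Finset.sum_congr rfl fun w _ => (Finset.sum_mul _ _ _).symm]
        rw [mul_comm, mul_assoc, hcc, mul_one]
    _ ≤ ∑ w, 2 * e * (∑ x, (if fut j x = w then P x else 0)) :=
        Finset.sum_le_sum fun w _ => H1 j hj w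
    _ = 2 * e := by
        rw [← Finset.mul_sum]
        rw [show (∑ w, ∑ x, (if fut j x = w then P x else 0)) = 1 by
          rw [Finset.sum_comm]
          rw [← hP1]
          exact Finset.sum_congr rfl fun x _ => by
            rw [Finset.sum_ite_eq univ (fut j x) (fun _ => P x)]; simp]
        rw [mul_one]

theorem AH_last [Nonempty S] (hP1 : ∑ x, P x = 1) (r : Fin L → R0) :
    AH f blk zfst zsnd L P L r = ((Fintype.card R0 : ℝ))⁻¹ ^ L := by
  unfold AH
  have hc : ∀ x s, condH f blk zfst zsnd L L x s r := by
    intro x s ℓ hℓ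
    exact absurd ℓ.isLt (by omega)
  have hS : (Fintype.card S : ℝ) ≠ 0 := by
    simp [Fintype.card_ne_zero]
  calc ((Fintype.card R0 : ℝ))⁻¹ ^ L *
        ∑ x, ∑ s, (if condH f blk zfst zsnd L L x s r then P x * ((Fintype.card S : ℝ))⁻¹ else 0)
      = ((Fintype.card R0 : ℝ))⁻¹ ^ L *
        ∑ x, (P x * ((Fintype.card S : ℝ) * ((Fintype.card S : ℝ))⁻¹)) := by
        congr 1
        refine Finset.sum_congr rfl fun x _ => ?_
        simp [hc, Finset.sum_const, Finset.card_univ]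
        field_simp
    _ = ((Fintype.card R0 : ℝ))⁻¹ ^ L := by
        rw [mul_inv_cancel₀ hS]
        simp [hP1]

theorem hybrid_main [Nonempty R0] [Nonempty S]
    (hbij : Function.Bijective fun z => (zfst z, zsnd z))
    (Hfut : ∀ j ℓ x, j < ℓ → blk ℓ (fut j x) = blk ℓ x)
    (hP1 : ∑ x, P x = 1) (e : ℝ)
    (H1 : ∀ j, j < L → ∀ w : X,
      ∑ z, |((Fintype.card S : ℝ))⁻¹ *
            (∑ x, ∑ s, (if fut j x = w ∧ f (blk j x) s = z then P x else 0))
          - (∑ x, (if fut j x = w then P x else 0)) * ((Fintype.card Z : ℝ))⁻¹|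
        ≤ 2 * e * (∑ x, (if fut j x = w then P x else 0))) :
    ∑ r : Fin L → R0, |AH f blk zfst zsnd L P 0 r - ((Fintype.card R0 : ℝ))⁻¹ ^ L|
      ≤ L * (2 * e) := by
  calc ∑ r : Fin L → R0, |AH f blk zfst zsnd L P 0 r - ((Fintype.card R0 : ℝ))⁻¹ ^ L|
      = ∑ r : Fin L → R0, |∑ i ∈ Finset.range L,
          (AH f blk zfst zsnd L P i r - AH f blk zfst zsnd L P (i+1) r)| := by
        refine Finset.sum_congr rfl fun r _ => ?_
        rw [Finset.sum_range_sub' (fun i => AH f blk zfst zsnd L P i r) L]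
        rw [AH_last f blk zfst zsnd L P hP1 r]
    _ ≤ ∑ r : Fin L → R0, ∑ i ∈ Finset.range L,
          |AH f blk zfst zsnd L P i r - AH f blk zfst zsnd L P (i+1) r| :=
        Finset.sum_le_sum fun r _ => Finset.abs_sum_le_sum_abs _ _
    _ = ∑ i ∈ Finset.range L, ∑ r : Fin L → R0,
          |AH f blk zfst zsnd L P i r - AH f blk zfst zsnd L P (i+1) r| := Finset.sum_comm
    _ ≤ ∑ _i ∈ Finset.range L, (2 * e) := by
        refine Finset.sum_le_sum fun i hi => ?_
        exact AH_step f blk zfst zsnd fut L P hbij Hfut hP1 e H1 (Finset.mem_range.mp hi)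
    _ = L * (2 * e) := by
        rw [Finset.sum_const, Finset.card_range, nsmul_eq_mul]

end Hybrid2

section Concrete
variable (b n N : ℕ) (d m : ℕ → ℕ)
  (E : (k : ℕ) → (Fin k → Bool) → (Fin (d k) → Bool) → (Fin (m k) → Bool))
  (hb : 0 < b) (hmd : ∀ ℓ, d (b * nn n 0 (ℓ + 1)) ≤ m (b * nn n 0 ℓ))

def zfstC (z : Fin (m (b * n)) → Bool) : Fin (m (b * n) - d (b * n)) → Bool :=
  fun i => z ⟨(i : ℕ), by have := i.isLt; omega⟩

def zsndC (z : Fin (m (b * n)) → Bool) : Fin (d (b * n)) → Bool :=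
  fun i => z ⟨m (b * n) - d (b * n) + (i : ℕ), by
    have h1 := i.isLt
    have h2 : d (b * n) ≤ m (b * n) := hmd 0
    omega⟩

def blkC (ℓ : ℕ) (x : Fin N → Fin b → Bool) : Fin (b * n) → Bool :=
  blockBits b n 0 hb (extData b N x) ℓ

def futC (j : ℕ) (x : Fin N → Fin b → Bool) : Fin N → Fin b → Bool :=
  fun u => if (j + 1) * n ≤ (u : ℕ) then x u else fun _ => false

lemma off_eq (ℓ : ℕ) : off n 0 ℓ = ℓ * n := by
  simp [off, nn]

lemma seedIter_zero_succ {X Y S Z : Type*} (f : Y → S → Z) (blk : ℕ → X → Y)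
    (zsnd : Z → S) (t : ℕ) (x : X) (s : S) :
    seedIter f blk zsnd 0 (t+1) x s = zsnd (f (blk t x) (seedIter f blk zsnd 0 t x s)) := by
  show zsnd (f (blk (0 + t) x) _) = _
  rw [Nat.zero_add]

lemma seeds_eq (x : Fin N → Fin b → Bool) (s : Fin (d (b * n)) → Bool) (t : ℕ) :
    seeds b n 0 d m E hb hmd (extData b N x) s t
      = seedIter (E (b * n)) (blkC b n N hb) (zsndC b n d m hmd) 0 t x s := by
  induction t with
  | zero => rfl
  | succ t ih =>
      rw [seedIter_zero_succ, ← ih]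
      rfl

lemma bijC : Function.Bijective
    (fun z => (zfstC b n d m z, zsndC b n d m hmd z)) := by
  have h2 : d (b * n) ≤ m (b * n) := hmd 0
  constructor
  · intro z z' h
    have h1 := congrArg Prod.fst h
    have hsnd := congrArg Prod.snd h
    simp only at h1 hsnd
    funext i
    rcases Nat.lt_or_ge (i : ℕ) (m (b * n) - d (b * n)) with hlt | hge
    · have := congrFun h1 ⟨(i : ℕ), hlt⟩
      simpa [zfstC, Fin.eta] using this
    · have hi := i.isLt
      have := congrFun hsnd ⟨(i : ℕ) - (m (b * n) - d (b * n)), by omega⟩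
      simp only [zsndC] at this
      convert this using 2 <;> · apply Fin.ext; simp; omega
  · rintro ⟨a, s⟩
    refine ⟨fun i => if hlt : (i : ℕ) < m (b * n) - d (b * n) then a ⟨(i : ℕ), hlt⟩
      else s ⟨(i : ℕ) - (m (b * n) - d (b * n)), by have := i.isLt; omega⟩, ?_⟩
    apply Prod.ext
    · funext i
      have hi : (i : ℕ) < m (b * n) - d (b * n) := i.isLt
      simp [zfstC, hi]
    · funext i
      simp only [zsndC]
      rw [dif_neg (by omega)]
      congr 1
      apply Fin.ext
      simp
lemma routput_eq (x : Fin N → Fin b → Bool) (s : Fin (d (b * n)) → Bool) {L : ℕ} (ℓ : Fin L) :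
    routput b n 0 d m E hb hmd (extData b N x) s ℓ
      = RoutH (E (b * n)) (blkC b n N hb) (zfstC b n d m) (zsndC b n d m hmd) 0 x s ℓ := by
  unfold RoutH
  rw [← seeds_eq b n N d m E hb hmd]
  rfl

lemma HfutC : ∀ (j ℓ : ℕ) (x : Fin N → Fin b → Bool), j < ℓ →
    blkC b n N hb ℓ (futC b n N j x) = blkC b n N hb ℓ x := by
  intro j ℓ x hjℓ
  funext i
  show extData b N (futC b n N j x) (off n 0 ℓ + (i : ℕ) / b) _
    = extData b N x (off n 0 ℓ + (i : ℕ) / b) _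
  have hoff : off n 0 ℓ = ℓ * n := off_eq n ℓ
  by_cases h : off n 0 ℓ + (i : ℕ) / b < N
  · have hle : (j + 1) * n ≤ off n 0 ℓ + (i : ℕ) / b := by
      calc (j + 1) * n ≤ ℓ * n := Nat.mul_le_mul_right n hjℓ
        _ ≤ off n 0 ℓ + (i : ℕ) / b := by rw [hoff]; exact Nat.le_add_right _ _
    simp only [extData, dif_pos h, futC, hle, if_pos]
  · simp only [extData, dif_neg h]

lemma futC_canon (j : ℕ) (x : Fin N → Fin b → Bool) (u : Fin N)
    (hu : (u : ℕ) < (j + 1) * n) : futC b n N j x u = fun _ => false := by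
  have h : ¬ ((j + 1) * n ≤ (u : ℕ)) := by omega
  simp only [futC, if_neg h]

lemma fut_iff (j : ℕ) (x w : Fin N → Fin b → Bool) (hn1 : 1 ≤ n)
    (hcanon : ∀ u : Fin N, (u : ℕ) < (j + 1) * n → w u = fun _ => false) :
    (∀ u : Fin N, j * n + (n - 1) < (u : ℕ) → x u = w u) ↔ futC b n N j x = w := by
  have hrw : (j + 1) * n = j * n + n := by ring
  constructor
  · intro h
    funext u
    by_cases hle : (j + 1) * n ≤ (u : ℕ)
    · rw [show futC b n N j x u = x u from by simp only [futC, if_pos hle]]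
      exact h u (by omega)
    · rw [futC_canon b n N j x u (by omega), hcanon u (by omega)]
  · intro h u hu
    rw [← h]
    simp only [futC, if_pos (show (j + 1) * n ≤ (u : ℕ) by omega)]

def zEnc (j : ℕ) (y : Fin (b * n) → Bool) : Fin N → Fin b → Bool :=
  fun u a => if h : j * n ≤ (u : ℕ) ∧ ((u : ℕ) - j * n) * b + (a : ℕ) < b * n
    then y ⟨((u : ℕ) - j * n) * b + (a : ℕ), h.2⟩ else false

lemma blk_iff (hn1 : 1 ≤ n) (j : ℕ) (hjN : j * n + (n - 1) < N)
    (x : Fin N → Fin b → Bool) (y : Fin (b * n) → Bool) :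
    (∀ u : Fin N, j * n ≤ (u : ℕ) → (u : ℕ) ≤ j * n + (n - 1) → x u = zEnc b n N j y u)
      ↔ blkC b n N hb j x = y := by
  have hoff : off n 0 j = j * n := off_eq n j
  constructor
  · intro h
    funext i
    have hib : (i : ℕ) / b < n := (Nat.div_lt_iff_lt_mul hb).mpr
      (Nat.lt_of_lt_of_eq i.isLt (Nat.mul_comm b n))
    have hu : j * n + (i : ℕ) / b < N := by omega
    have harith : (j * n + (i : ℕ) / b - j * n) * b + (i : ℕ) % b = (i : ℕ) := by
      rw [Nat.add_sub_cancel_left, mul_comm]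
      exact Nat.div_add_mod _ _
    show extData b N x (off n 0 j + (i : ℕ) / b) ⟨(i : ℕ) % b, Nat.mod_lt _ hb⟩ = y i
    rw [hoff]
    rw [show extData b N x (j * n + (i : ℕ) / b) = x ⟨j * n + (i : ℕ) / b, hu⟩ from by
      simp only [extData, dif_pos hu]]
    have hx := h ⟨j * n + (i : ℕ) / b, hu⟩ (Nat.le_add_right _ _)
      (by simp only [Fin.val_mk]; omega)
    rw [congrFun hx ⟨(i : ℕ) % b, Nat.mod_lt _ hb⟩]
    simp only [zEnc]
    have hc1 : j * n ≤ j * n + (i : ℕ) / b := Nat.le_add_right _ _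
    have hc2 : (j * n + (i : ℕ) / b - j * n) * b + (i : ℕ) % b < b * n := by
      rw [harith]; exact i.isLt
    rw [dif_pos ⟨hc1, hc2⟩]
    congr 1
    apply Fin.ext
    show (j * n + (i : ℕ) / b - j * n) * b + (i : ℕ) % b = (i : ℕ)
    exact harith
  · intro h u hu1 hu2
    funext a
    have hkey : ∀ i : Fin (b * n),
        extData b N x (off n 0 j + (i : ℕ) / b) ⟨(i : ℕ) % b, Nat.mod_lt _ hb⟩ = y i :=
      fun i => congrFun h i
    have hub : (u : ℕ) - j * n < n := by omega
    have hi : ((u : ℕ) - j * n) * b + (a : ℕ) < b * n := by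
      calc ((u : ℕ) - j * n) * b + (a : ℕ) < ((u : ℕ) - j * n) * b + b :=
            Nat.add_lt_add_left a.isLt _
        _ = (((u : ℕ) - j * n) + 1) * b := by ring
        _ ≤ n * b := Nat.mul_le_mul_right b (by omega)
        _ = b * n := mul_comm _ _
    have hdiv : (((u : ℕ) - j * n) * b + (a : ℕ)) / b = (u : ℕ) - j * n := by
      rw [mul_comm ((u : ℕ) - j * n) b, Nat.mul_add_div hb, Nat.div_eq_of_lt a.isLt, add_zero]
    have hmod : (((u : ℕ) - j * n) * b + (a : ℕ)) % b = (a : ℕ) := by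
      rw [mul_comm ((u : ℕ) - j * n) b, Nat.mul_add_mod, Nat.mod_eq_of_lt a.isLt]
    have hthis := hkey ⟨((u : ℕ) - j * n) * b + (a : ℕ), hi⟩
    simp only [Fin.val_mk, hdiv, hmod, hoff] at hthis
    rw [show j * n + ((u : ℕ) - j * n) = (u : ℕ) from by omega] at hthis
    rw [show extData b N x (u : ℕ) = x u from by
      simp only [extData, dif_pos u.isLt, Fin.eta]] at hthis
    simp only [Fin.eta] at hthis
    rw [hthis]
    simp only [zEnc]
    rw [dif_pos ⟨hu1, hi⟩]

end Concrete

/-- Security of the equal-block extractor `Ext_rbs^eq` (Theorem 2, classical version):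
for a `(b,N,δ)`-reverse block source, with block length
`n = ⌈(4/(δb)) log₂(N/ε)⌉` dividing `N`, applying a `(δbn, 2^{-δbn/4})` min-entropy
extractor to each of the `N/n` blocks (reusing the last `d_{bn}` output bits of each block
as the next seed and outputting the first `m_{bn} - d_{bn}` bits `r^{(ℓ)}`), the
concatenated output is within statistical distance `(N/n)·2^{-δbn/4} ≤ ε` of uniform on
`(N/n)(m_{bn} - d_{bn})` bits. -/
theorem stmt7 (b N : ℕ) (δ ε : ℝ) (hb : 0 < b) (hN : 0 < N)
    (hδ : 0 < δ) (hδ1 : δ < 1) (hε : 0 < ε) (hε1 : ε < 1)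
    (n : ℕ) (hn : n = ⌈(4 / (δ * (b : ℝ))) * Real.logb 2 ((N : ℝ) / ε)⌉₊)
    (hdvd : n ∣ N)
    (d m : ℕ → ℕ)
    (E : (n : ℕ) → (Fin n → Bool) → (Fin (d n) → Bool) → (Fin (m n) → Bool))
    (hmd : ∀ ℓ, d (b * nn n 0 (ℓ + 1)) ≤ m (b * nn n 0 ℓ))
    (hE : IsExtractor (E (b * n)) (δ * (b * n)) ((2 : ℝ) ^ (-(δ * (b * n)) / 4)))
    (P : (Fin N → (Fin b → Bool)) → ℝ)
    (hP : IsPmf P) (hrbs : IsRBS b N δ P) :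
    sd (fun r : (ℓ : Fin (N / n)) →
          Fin (m (b * nn n 0 ℓ) - d (b * nn n 0 (ℓ + 1))) → Bool =>
        ∑ x : Fin N → (Fin b → Bool), ∑ s0 : Fin (d (b * nn n 0 0)) → Bool,
          if (∀ ℓ : Fin (N / n),
              routput b n 0 d m E hb hmd (extData b N x) s0 ℓ = r ℓ)
          then P x * ((2 : ℝ)⁻¹) ^ (d (b * nn n 0 0)) else 0)
      (unif _)
      ≤ ((N / n : ℕ) : ℝ) * (2 : ℝ) ^ (-(δ * (b * n)) / 4)
    ∧ ((N / n : ℕ) : ℝ) * (2 : ℝ) ^ (-(δ * (b * n)) / 4) ≤ ε := by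
  obtain ⟨hP0, hP1⟩ := hP
  have hbR : (0:ℝ) < (b:ℝ) := Nat.cast_pos.mpr hb
  have hNR : (1:ℝ) ≤ (N:ℝ) := by exact_mod_cast hN
  have hNε : (1:ℝ) < (N:ℝ) / ε := by
    rw [lt_div_iff₀ hε]; linarith
  have hNεpos : (0:ℝ) < (N:ℝ) / ε := by linarith
  have hlogpos : 0 < Real.logb 2 ((N:ℝ) / ε) := Real.logb_pos (by norm_num) hNε
  have hn1 : 1 ≤ n := by
    have : 0 < n := by
      rw [hn]
      refine Nat.ceil_pos.mpr ?_
      have h4 : (0:ℝ) < 4 / (δ * (b:ℝ)) := by positivity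
      positivity
    omega
  have hL : (N / n) * n = N := Nat.div_mul_cancel hdvd
  have hblog : Real.logb 2 ((N:ℝ) / ε) ≤ δ * (b:ℝ) * (n:ℝ) / 4 := by
    have hx : 4 / (δ * (b:ℝ)) * Real.logb 2 ((N:ℝ) / ε) ≤ (n:ℝ) := by
      rw [hn]; exact Nat.le_ceil _
    have hdb : (0:ℝ) < δ * (b:ℝ) := mul_pos hδ hbR
    have h2 := mul_le_mul_of_nonneg_left hx (le_of_lt (show (0:ℝ) < δ * (b:ℝ) / 4 by linarith))
    rw [show δ * (b:ℝ) / 4 * (4 / (δ * (b:ℝ)) * Real.logb 2 ((N:ℝ) / ε))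
        = Real.logb 2 ((N:ℝ) / ε) from by field_simp] at h2
    calc Real.logb 2 ((N:ℝ) / ε) ≤ δ * (b:ℝ) / 4 * (n:ℝ) := h2
      _ = δ * (b:ℝ) * (n:ℝ) / 4 := by ring
  have hePart : (2:ℝ) ^ (-(δ * ((b:ℝ) * (n:ℝ))) / 4) ≤ ε / (N:ℝ) := by
    calc (2:ℝ) ^ (-(δ * ((b:ℝ) * (n:ℝ))) / 4)
        ≤ (2:ℝ) ^ (-(Real.logb 2 ((N:ℝ) / ε))) := by
          refine Real.rpow_le_rpow_of_exponent_le one_le_two ?_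
          have : δ * ((b:ℝ) * (n:ℝ)) = δ * (b:ℝ) * (n:ℝ) := by ring
          rw [this]; linarith
      _ = ((N:ℝ) / ε)⁻¹ := by
          rw [Real.rpow_neg (by norm_num), Real.rpow_logb (by norm_num) (by norm_num) hNεpos]
      _ = ε / (N:ℝ) := by rw [inv_div]
  have hpart2 : ((N / n : ℕ) : ℝ) * (2 : ℝ) ^ (-(δ * (b * n)) / 4) ≤ ε := by
    have h3 : ((N / n : ℕ) : ℝ) ≤ (N:ℝ) := by exact_mod_cast Nat.div_le_self N n
    have h4 : (0:ℝ) ≤ ((N / n : ℕ) : ℝ) := Nat.cast_nonneg _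
    calc ((N / n : ℕ) : ℝ) * (2 : ℝ) ^ (-(δ * (b * n)) / 4)
        ≤ ((N / n : ℕ) : ℝ) * (ε / (N:ℝ)) := mul_le_mul_of_nonneg_left hePart h4
      _ ≤ (N:ℝ) * (ε / (N:ℝ)) := mul_le_mul_of_nonneg_right h3 (by positivity)
      _ = ε := by field_simp
  refine ⟨?_, hpart2⟩
  have hcardS : ((Fintype.card (Fin (d (b * n)) → Bool) : ℝ))⁻¹ = ((2:ℝ)⁻¹) ^ (d (b * n)) := by
    rw [Fintype.card_fun, Fintype.card_fin, Fintype.card_bool]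
    push_cast
    rw [inv_pow]
  have H1 : ∀ j, j < N / n → ∀ w : Fin N → Fin b → Bool,
      ∑ z : Fin (m (b * n)) → Bool,
        |((Fintype.card (Fin (d (b * n)) → Bool) : ℝ))⁻¹ *
            (∑ x : Fin N → Fin b → Bool, ∑ s : Fin (d (b * n)) → Bool,
              (if futC b n N j x = w ∧ E (b * n) (blkC b n N hb j x) s = z then P x else 0))
          - (∑ x : Fin N → Fin b → Bool, (if futC b n N j x = w then P x else 0)) *
            ((Fintype.card (Fin (m (b * n)) → Bool) : ℝ))⁻¹|
        ≤ 2 * ((2:ℝ) ^ (-(δ * ((b:ℝ) * (n:ℝ))) / 4)) *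
          (∑ x : Fin N → Fin b → Bool, (if futC b n N j x = w then P x else 0)) := by
    intro j hj w
    set p : ℝ := ∑ x : Fin N → Fin b → Bool, (if futC b n N j x = w then P x else 0) with hpdef
    have hitenn : ∀ x : Fin N → Fin b → Bool,
        0 ≤ (if futC b n N j x = w then P x else 0) := by
      intro x
      by_cases hfx : futC b n N j x = w
      · rw [if_pos hfx]; exact hP0 x
      · rw [if_neg hfx]
    have hp0 : 0 ≤ p := Finset.sum_nonneg fun x _ => hitenn x
    by_cases hpz : p = 0
    · have hz : ∀ x, (if futC b n N j x = w then P x else 0) = 0 := by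
        intro x
        exact (Finset.sum_eq_zero_iff_of_nonneg (fun x _ => hitenn x)).mp hpz.symm.symm x
          (Finset.mem_univ x)
      have hQz : ∀ z : Fin (m (b * n)) → Bool,
          (∑ x : Fin N → Fin b → Bool, ∑ s : Fin (d (b * n)) → Bool,
            (if futC b n N j x = w ∧ E (b * n) (blkC b n N hb j x) s = z then P x else 0)) = 0 := by
        intro z
        refine Finset.sum_eq_zero fun x _ => Finset.sum_eq_zero fun s _ => ?_
        by_cases hc : futC b n N j x = w ∧ E (b * n) (blkC b n N hb j x) s = z
        · rw [if_pos hc]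
          have h5 := hz x
          rw [if_pos hc.1] at h5
          exact h5
        · rw [if_neg hc]
      rw [hpz]
      simp only [hQz, mul_zero, zero_mul, sub_zero, abs_zero]
      simp
    · have hppos : 0 < p := lt_of_le_of_ne hp0 (Ne.symm hpz)
      have hx0 : ∃ x0, futC b n N j x0 = w := by
        by_contra hcon
        push_neg at hcon
        exact hpz (by rw [hpdef]; exact Finset.sum_eq_zero fun x _ => if_neg (hcon x))
      obtain ⟨x0, hx0⟩ := hx0
      have hcanon : ∀ u : Fin N, (u : ℕ) < (j + 1) * n → w u = fun _ => false :=
        fun u hu => by rw [← hx0]; exact futC_canon b n N j x0 u hu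
      have hjN : j * n + (n - 1) < N := by
        have h1 : (j + 1) * n ≤ N := by
          calc (j + 1) * n ≤ (N / n) * n := Nat.mul_le_mul_right n hj
            _ = N := hL
        have h2 : (j + 1) * n = j * n + n := by ring
        omega
      set num : (Fin (b * n) → Bool) → ℝ := fun y =>
        ∑ x : Fin N → Fin b → Bool,
          (if blkC b n N hb j x = y ∧ futC b n N j x = w then P x else 0) with hnumdef
      have hnum0 : ∀ y, 0 ≤ num y := by
        intro y
        refine Finset.sum_nonneg fun x _ => ?_
        by_cases hc : blkC b n N hb j x = y ∧ futC b n N j x = w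
        · rw [if_pos hc]; exact hP0 x
        · rw [if_neg hc]
      have hrbsy : ∀ y, num y ≤ (2:ℝ) ^ (-(δ * ((b:ℝ) * (n:ℝ)))) * p := by
        intro y
        have h0 := hrbs (j * n) (j * n + (n - 1)) (Nat.le_add_right _ _) hjN w (zEnc b n N j y)
        rw [Finset.sum_filter, Finset.sum_filter] at h0
        have hexp : -((((j * n + (n - 1) : ℕ) : ℝ) - ((j * n : ℕ) : ℝ) + 1) * (δ * (b:ℝ)))
            = -(δ * ((b:ℝ) * (n:ℝ))) := by
          have hcast : ((n - 1 : ℕ) : ℝ) = (n:ℝ) - 1 := by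
            push_cast [Nat.cast_sub hn1]
            ring
          push_cast [hcast]
          ring
        rw [hexp] at h0
        have hA : ∀ x : Fin N → Fin b → Bool,
            ((∀ u : Fin N, j * n ≤ (u:ℕ) → (u:ℕ) ≤ j * n + (n-1) → x u = zEnc b n N j y u) ∧
             (∀ u : Fin N, j * n + (n-1) < (u:ℕ) → x u = w u))
            ↔ (blkC b n N hb j x = y ∧ futC b n N j x = w) :=
          fun x => and_congr (blk_iff b n N hb hn1 j hjN x y) (fut_iff b n N j x w hn1 hcanon)
        calc num y
            = ∑ x : Fin N → Fin b → Bool,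
              (if ((∀ u : Fin N, j * n ≤ (u:ℕ) → (u:ℕ) ≤ j * n + (n-1) →
                    x u = zEnc b n N j y u) ∧
                  (∀ u : Fin N, j * n + (n-1) < (u:ℕ) → x u = w u)) then P x else 0) := by
              rw [hnumdef]
              exact Finset.sum_congr rfl fun x _ => (if_congr (hA x) rfl rfl).symm
          _ ≤ (2:ℝ) ^ (-(δ * ((b:ℝ) * (n:ℝ)))) *
              ∑ x : Fin N → Fin b → Bool,
                (if (∀ u : Fin N, j * n + (n-1) < (u:ℕ) → x u = w u) then P x else 0) := h0
          _ = (2:ℝ) ^ (-(δ * ((b:ℝ) * (n:ℝ)))) * p := by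
              rw [hpdef]
              congr 1
              exact Finset.sum_congr rfl fun x _ =>
                if_congr (fut_iff b n N j x w hn1 hcanon) rfl rfl
      set Pn : (Fin (b * n) → Bool) → ℝ := fun y => num y / p with hPndef
      have hPn0 : ∀ y, 0 ≤ Pn y := fun y => div_nonneg (hnum0 y) hp0
      have hnum_sum : ∑ y, num y = p := by
        rw [hnumdef, hpdef, Finset.sum_comm]
        refine Finset.sum_congr rfl fun x _ => ?_
        by_cases hfx : futC b n N j x = w
        · simp [hfx]
        · simp [hfx]
      have hPn_sum : ∑ y, Pn y = 1 := by
        rw [hPndef, ← Finset.sum_div, hnum_sum, div_self hpz]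
      have hub : ∀ y, Pn y ≤ (2:ℝ) ^ (-(δ * ((b:ℝ) * (n:ℝ)))) := fun y => by
        rw [hPndef]
        exact (div_le_iff₀ hppos).mpr (hrbsy y)
      have hHmin : δ * ((b:ℝ) * (n:ℝ)) ≤ Hmin Pn := by
        have hex : ∃ y0, 0 < Pn y0 := by
          by_contra hcon
          push_neg at hcon
          have hle : ∑ y, Pn y ≤ 0 := Finset.sum_nonpos fun y _ => hcon y
          rw [hPn_sum] at hle
          linarith
        obtain ⟨y0, hy0⟩ := hex
        have hsup_pos : 0 < Finset.univ.sup' Finset.univ_nonempty Pn :=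
          lt_of_lt_of_le hy0 (Finset.le_sup' Pn (Finset.mem_univ y0))
        have hsup_le : Finset.univ.sup' Finset.univ_nonempty Pn
            ≤ (2:ℝ) ^ (-(δ * ((b:ℝ) * (n:ℝ)))) :=
          Finset.sup'_le _ _ fun y _ => hub y
        have hlog := Real.logb_le_logb_of_le (b := 2) (by norm_num) hsup_pos hsup_le
        rw [Real.logb_rpow (by norm_num) (by norm_num)] at hlog
        unfold Hmin
        linarith
      have hext := hE Pn ⟨hPn0, hPn_sum⟩ hHmin
      have Qgroup : ∀ z : Fin (m (b * n)) → Bool,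
          (∑ x : Fin N → Fin b → Bool, ∑ s : Fin (d (b * n)) → Bool,
            (if futC b n N j x = w ∧ E (b * n) (blkC b n N hb j x) s = z then P x else 0))
          = ∑ y : Fin (b * n) → Bool, ∑ s : Fin (d (b * n)) → Bool,
              (if E (b * n) y s = z then num y else 0) := by
        intro z
        symm
        calc ∑ y : Fin (b * n) → Bool, ∑ s : Fin (d (b * n)) → Bool,
              (if E (b * n) y s = z then num y else 0)
            = ∑ y : Fin (b * n) → Bool, ∑ s : Fin (d (b * n)) → Bool,
                ∑ x : Fin N → Fin b → Bool,
                (if blkC b n N hb j x = y ∧ futC b n N j x = w then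
                  (if E (b * n) y s = z then P x else 0) else 0) := by
              refine Finset.sum_congr rfl fun y _ => Finset.sum_congr rfl fun s _ => ?_
              rw [hnumdef]
              simp only
              rw [← sum_ite_out]
              exact Finset.sum_congr rfl fun x _ => ite_swap' _ _ _
          _ = ∑ x : Fin N → Fin b → Bool, ∑ s : Fin (d (b * n)) → Bool,
                ∑ y : Fin (b * n) → Bool,
                (if blkC b n N hb j x = y ∧ futC b n N j x = w then
                  (if E (b * n) y s = z then P x else 0) else 0) := sum_rot3 _
          _ = ∑ x : Fin N → Fin b → Bool, ∑ s : Fin (d (b * n)) → Bool,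
              (if futC b n N j x = w ∧ E (b * n) (blkC b n N hb j x) s = z then P x else 0) := by
              refine Finset.sum_congr rfl fun x _ => Finset.sum_congr rfl fun s _ => ?_
              calc ∑ y : Fin (b * n) → Bool,
                    (if blkC b n N hb j x = y ∧ futC b n N j x = w then
                      (if E (b * n) y s = z then P x else 0) else 0)
                  = ∑ y : Fin (b * n) → Bool,
                    (if blkC b n N hb j x = y then
                      (if futC b n N j x = w then
                        (if E (b * n) y s = z then P x else 0) else 0) else 0) :=
                    Finset.sum_congr rfl fun y _ => (ite_merge' _ _ _).symm
                _ = (if futC b n N j x = w then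
                      (if E (b * n) (blkC b n N hb j x) s = z then P x else 0) else 0) := by
                    rw [Finset.sum_ite_eq univ (blkC b n N hb j x)]
                    simp
                _ = (if futC b n N j x = w ∧ E (b * n) (blkC b n N hb j x) s = z
                      then P x else 0) := ite_merge' _ _ _
      have hpt : ∀ z : Fin (m (b * n)) → Bool,
          ((Fintype.card (Fin (d (b * n)) → Bool) : ℝ))⁻¹ *
              (∑ x : Fin N → Fin b → Bool, ∑ s : Fin (d (b * n)) → Bool,
                (if futC b n N j x = w ∧ E (b * n) (blkC b n N hb j x) s = z then P x else 0))
            - p * ((Fintype.card (Fin (m (b * n)) → Bool) : ℝ))⁻¹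
          = p * ((∑ y : Fin (b * n) → Bool, ∑ s : Fin (d (b * n)) → Bool,
              (if E (b * n) y s = z then Pn y * ((2:ℝ)⁻¹) ^ (d (b * n)) else 0))
            - unif (Fin (m (b * n)) → Bool) z) := by
        intro z
        rw [Qgroup z, mul_sub]
        congr 1
        · rw [Finset.mul_sum, Finset.mul_sum]
          refine Finset.sum_congr rfl fun y _ => ?_
          rw [Finset.mul_sum, Finset.mul_sum]
          refine Finset.sum_congr rfl fun s _ => ?_
          by_cases hc : E (b * n) y s = z
          · rw [if_pos hc, if_pos hc, hcardS, hPndef]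
            simp only
            field_simp
          · rw [if_neg hc, if_neg hc, mul_zero, mul_zero]
      calc ∑ z : Fin (m (b * n)) → Bool,
            |((Fintype.card (Fin (d (b * n)) → Bool) : ℝ))⁻¹ *
              (∑ x : Fin N → Fin b → Bool, ∑ s : Fin (d (b * n)) → Bool,
                (if futC b n N j x = w ∧ E (b * n) (blkC b n N hb j x) s = z then P x else 0))
            - p * ((Fintype.card (Fin (m (b * n)) → Bool) : ℝ))⁻¹|
          = ∑ z : Fin (m (b * n)) → Bool,
            p * |(∑ y : Fin (b * n) → Bool, ∑ s : Fin (d (b * n)) → Bool,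
              (if E (b * n) y s = z then Pn y * ((2:ℝ)⁻¹) ^ (d (b * n)) else 0))
              - unif (Fin (m (b * n)) → Bool) z| := by
            refine Finset.sum_congr rfl fun z _ => ?_
            rw [hpt z, abs_mul, abs_of_nonneg hp0]
        _ = p * ∑ z : Fin (m (b * n)) → Bool,
            |(∑ y : Fin (b * n) → Bool, ∑ s : Fin (d (b * n)) → Bool,
              (if E (b * n) y s = z then Pn y * ((2:ℝ)⁻¹) ^ (d (b * n)) else 0))
              - unif (Fin (m (b * n)) → Bool) z| := (Finset.mul_sum _ _ _).symm
        _ ≤ p * (2 * ((2:ℝ) ^ (-(δ * ((b:ℝ) * (n:ℝ))) / 4))) := by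
            refine mul_le_mul_of_nonneg_left ?_ hp0
            have hsd := hext
            unfold sd at hsd
            linarith
        _ = 2 * ((2:ℝ) ^ (-(δ * ((b:ℝ) * (n:ℝ))) / 4)) * p := by ring
  have hmain := hybrid_main (E (b * n)) (blkC b n N hb) (zfstC b n d m) (zsndC b n d m hmd)
      (futC b n N) (N / n) P (bijC b n d m hmd) (HfutC b n N hb) hP1
      ((2:ℝ) ^ (-(δ * ((b:ℝ) * (n:ℝ))) / 4)) H1
  have hpt0 : ∀ r : Fin (N / n) → (Fin (m (b * n) - d (b * n)) → Bool),
      (∑ x : Fin N → (Fin b → Bool), ∑ s0 : Fin (d (b * n)) → Bool,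
        @ite _ (∀ ℓ : Fin (N / n),
            routput b n 0 d m E hb hmd (extData b N x) s0 (ℓ : ℕ) = r ℓ)
        (@Nat.decidableForallFin _ _ (fun _ => Fintype.decidablePiFintype _ _))
        (P x * ((2 : ℝ)⁻¹) ^ (d (b * n))) 0)
      = AH (E (b * n)) (blkC b n N hb) (zfstC b n d m) (zsndC b n d m hmd) (N / n) P 0 r := by
    intro r
    unfold AH
    rw [pow_zero, one_mul]
    refine Finset.sum_congr rfl fun x _ => Finset.sum_congr rfl fun s _ => ?_
    letI := @Nat.decidableForallFin (N / n) (fun ℓ : Fin (N / n) =>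
      routput b n 0 d m E hb hmd (extData b N x) s (ℓ : ℕ) = r ℓ) (fun _ => Fintype.decidablePiFintype _ _)
    refine if_congr ?_ (by rw [hcardS]) rfl
    constructor
    · intro h ℓ _
      rw [← routput_eq b n N d m E hb hmd x s ℓ]
      exact h ℓ
    · intro h ℓ
      rw [routput_eq b n N d m E hb hmd x s ℓ]
      exact h ℓ (Nat.zero_le _)
  have hu : ∀ r : Fin (N / n) → (Fin (m (b * n) - d (b * n)) → Bool),
      unif (Fin (N / n) → (Fin (m (b * n) - d (b * n)) → Bool)) r
      = ((Fintype.card (Fin (m (b * n) - d (b * n)) → Bool) : ℝ))⁻¹ ^ (N / n) := by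
    intro r
    unfold unif
    rw [Fintype.card_fun, Fintype.card_fin]
    push_cast
    rw [← inv_pow]
  show sd (fun r : Fin (N / n) → (Fin (m (b * n) - d (b * n)) → Bool) =>
        ∑ x : Fin N → (Fin b → Bool), ∑ s0 : Fin (d (b * n)) → Bool,
          @ite _ (∀ ℓ : Fin (N / n),
              routput b n 0 d m E hb hmd (extData b N x) s0 (ℓ : ℕ) = r ℓ)
          (@Nat.decidableForallFin _ _ (fun _ => Fintype.decidablePiFintype _ _))
          (P x * ((2 : ℝ)⁻¹) ^ (d (b * n))) 0)
      (unif (Fin (N / n) → (Fin (m (b * n) - d (b * n)) → Bool)))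
      ≤ ((N / n : ℕ) : ℝ) * (2 : ℝ) ^ (-(δ * ((b:ℝ) * (n:ℝ))) / 4)
  unfold sd
  have hsum_eq : (∑ r : Fin (N / n) → (Fin (m (b * n) - d (b * n)) → Bool),
        |(∑ x : Fin N → (Fin b → Bool), ∑ s0 : Fin (d (b * n)) → Bool,
          @ite _ (∀ ℓ : Fin (N / n),
              routput b n 0 d m E hb hmd (extData b N x) s0 (ℓ : ℕ) = r ℓ)
          (@Nat.decidableForallFin _ _ (fun _ => Fintype.decidablePiFintype _ _))
          (P x * ((2 : ℝ)⁻¹) ^ (d (b * n))) 0)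
          - unif (Fin (N / n) → (Fin (m (b * n) - d (b * n)) → Bool)) r|)
      = ∑ r : Fin (N / n) → (Fin (m (b * n) - d (b * n)) → Bool),
          |AH (E (b * n)) (blkC b n N hb) (zfstC b n d m) (zsndC b n d m hmd) (N / n) P 0 r
            - ((Fintype.card (Fin (m (b * n) - d (b * n)) → Bool) : ℝ))⁻¹ ^ (N / n)| :=
    Finset.sum_congr rfl fun r _ => by rw [hpt0 r, hu r]
  rw [hsum_eq]
  linarith [hmain]
end

section
/- Bit-wise ratio bound implies conditional probability bound: let X be a random variable on {0,1}^M such that for every index i and every choice of the other bits, Pr[X = x with bit i = 0] / Pr[X = x with bit i = 1] lies in [(1−2^{−δ})/2^{−δ}, 2^{−δ}/(1−2^{−δ})]. Then for every i and every assignment x_i, x_{i+1}, …, x_M, we have Pr[X_i = x_i | X_{i+1}=x_{i+1}, …, X_M=x_M] ≤ 2^{−δ}. -/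
open Finset

/-- Bit-wise ratio bound implies conditional probability bound: if for every bit position
`i` and every setting of the other bits the ratio of the two point probabilities lies in
`[(1-2^{-δ})/2^{-δ}, 2^{-δ}/(1-2^{-δ})]` (stated multiplicatively), then for every `i`
and every assignment `x_i, x_{i+1}, …, x_M`,
`Pr[X_i = x_i | X_{i+1} = x_{i+1}, …, X_M = x_M] ≤ 2^{-δ}` (stated multiplicatively). -/
theorem stmt11 (M : ℕ) (δ : ℝ) (hδ : 0 < δ) (hδ1 : δ < 1)
    (P : (Fin M → Bool) → ℝ) (hP : IsPmf P)
    (hratio : ∀ (i : Fin M) (x : Fin M → Bool),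
      (1 - (2 : ℝ) ^ (-δ)) * P (Function.update x i false)
          ≤ (2 : ℝ) ^ (-δ) * P (Function.update x i true) ∧
      (1 - (2 : ℝ) ^ (-δ)) * P (Function.update x i true)
          ≤ (2 : ℝ) ^ (-δ) * P (Function.update x i false))
    (i : Fin M) (xs : Fin M → Bool) :
    ∑ x ∈ univ.filter (fun x : Fin M → Bool => ∀ j : Fin M, i ≤ j → x j = xs j), P x
      ≤ (2 : ℝ) ^ (-δ) *
        ∑ x ∈ univ.filter (fun x : Fin M → Bool => ∀ j : Fin M, i < j → x j = xs j), P x := by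
  classical
  set c := (2 : ℝ) ^ (-δ) with hc
  set S := univ.filter (fun x : Fin M → Bool => ∀ j : Fin M, i < j → x j = xs j) with hS
  have hsplit : univ.filter (fun x : Fin M → Bool => ∀ j : Fin M, i ≤ j → x j = xs j)
      = S.filter (fun x => x i = xs i) := by
    ext x
    simp only [hS, mem_filter, mem_univ, true_and, Finset.filter_filter]
    constructor
    · intro h; exact ⟨fun j hj => h j hj.le, h i le_rfl⟩
    · rintro ⟨h1, h2⟩ j hj
      rcases hj.lt_or_eq with h | h
      · exact h1 j h
      · rw [← h]; exact h2
  rw [hsplit]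
  set A := ∑ x ∈ S.filter (fun x => x i = xs i), P x with hA
  set B := ∑ x ∈ S.filter (fun x => ¬ x i = xs i), P x with hB
  have hSsum : ∑ x ∈ S, P x = A + B := (Finset.sum_filter_add_sum_filter_not S _ P).symm
  have hupd_mem : ∀ (b : Bool) (x : Fin M → Bool), x ∈ S → Function.update x i b ∈ S := by
    intro b x hx
    simp only [hS, mem_filter, mem_univ, true_and] at hx ⊢
    intro j hj
    rw [Function.update_of_ne hj.ne']
    exact hx j hj
  have hkey : (1 - c) * A ≤ c * B := by
    have h1 : (1 - c) * A = ∑ x ∈ S.filter (fun x => x i = xs i), (1 - c) * P x := by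
      rw [Finset.mul_sum]
    have h2 : ∑ x ∈ S.filter (fun x => x i = xs i), (1 - c) * P x
        ≤ ∑ x ∈ S.filter (fun x => x i = xs i), c * P (Function.update x i (!xs i)) := by
      apply Finset.sum_le_sum
      intro x hx
      simp only [mem_filter] at hx
      have hxeq : Function.update x i (xs i) = x := by
        rw [← hx.2]; exact Function.update_eq_self i x
      rcases hratio i x with ⟨hr1, hr2⟩
      cases hb : xs i
      · rw [hb] at hxeq; rw [← hxeq]; simpa using hr1
      · rw [hb] at hxeq; rw [← hxeq]; simpa using hr2
    have h3 : ∑ x ∈ S.filter (fun x => x i = xs i), c * P (Function.update x i (!xs i))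
        = c * B := by
      rw [hB, Finset.mul_sum]
      refine Finset.sum_bij' (fun x _ => Function.update x i (!xs i))
        (fun y _ => Function.update y i (xs i)) ?_ ?_ ?_ ?_ ?_
      · intro x hx
        simp only [mem_filter] at hx ⊢
        refine ⟨hupd_mem _ _ hx.1, ?_⟩
        simp
      · intro y hy
        simp only [mem_filter] at hy ⊢
        refine ⟨hupd_mem _ _ hy.1, ?_⟩
        simp
      · intro x hx
        simp only [mem_filter] at hx
        show Function.update (Function.update x i (!xs i)) i (xs i) = x
        rw [Function.update_idem, ← hx.2, Function.update_eq_self]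
      · intro y hy
        simp only [mem_filter] at hy
        show Function.update (Function.update y i (xs i)) i (!xs i) = y
        rw [Function.update_idem]
        have hyi : y i = !xs i := by
          cases h : y i <;> cases h' : xs i <;> simp_all
        rw [← hyi, Function.update_eq_self]
      · intro x hx
        rfl
    linarith [h1, h2, h3]
  rw [hSsum, mul_add]
  linarith [hkey]
end
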